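/- arXiv:2411.16045 — 7 statements merged into one kernel-verified Lean document; each statement's English description precedes it below -/
import Mathlib

section
/- An nth level cylinder I_{n,β}(ε_n) is full if and only if for every β-admissible sequence ε'_m of length m ≥ 1, the concatenation ε_n ε'_m is β-admissible; moreover in this case |I_{n+m,β}(ε_n ε'_m)| = |I_{n,β}(ε_n)| · |I_{m,β}(ε'_m)|. Consequently, the concatenation of two full sequences is full. -/
open MeasureTheory Set
open scoped Classical Topology BigOperators ENNReal

/-- The β-transformation `x ↦ βx (mod 1)` on `[0,1)`. -/
noncomputable def Tb (β : ℝ) : ℝ → ℝ := fun x => Int.fract (β * x)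

/-- The k-th digit (0-indexed) of the β-expansion of x. -/
noncomputable def bdigit (β : ℝ) (k : ℕ) (x : ℝ) : ℤ := ⌊β * (Tb β)^[k] x⌋

/-- The cylinder of points of `[0,1)` whose β-expansion starts with ε. -/
def cylinder (β : ℝ) (n : ℕ) (ε : Fin n → ℤ) : Set ℝ :=
  {x | x ∈ Set.Ico (0:ℝ) 1 ∧ ∀ k : Fin n, bdigit β k x = ε k}

/-- ε is β-admissible iff its cylinder is nonempty. -/
def BAdmissible (β : ℝ) (n : ℕ) (ε : Fin n → ℤ) : Prop :=
  (cylinder β n ε).Nonempty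

/-- ε is full iff it is admissible and its cylinder has maximal length β^(-n). -/
def IsFull (β : ℝ) (n : ℕ) (ε : Fin n → ℤ) : Prop :=
  BAdmissible β n ε ∧ volume (cylinder β n ε) = ENNReal.ofReal (β ^ (-(n:ℤ)))

/-! On the cylinder of `ε`, the map `T^n` is the affine map `x ↦ β^n x - wordValue β n ε`. Hence
every cylinder is an interval, `T^n` maps it into `[0,1)`, and `ε` is full exactly when the
image is all of `[0,1)`. In that case the cylinder of `ε ε'` is the preimage of the cylinder of
`ε'` under this affine map, which gives both admissibility and the product formula for lengths.
Conversely, if every admissible word may follow `ε`, then the image of `T^n` meets every cylinder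
of every length `M`. Such a cylinder has diameter less than `β^(-M)`, so the image is dense in
`[0,1)`, and since it is an interval it is all of `[0,1)`. -/

noncomputable def wordValue (β : ℝ) : ∀ n, (Fin n → ℤ) → ℝ
  | 0, _ => 0
  | n + 1, ε => ε 0 * β ^ n + wordValue β n (Fin.tail ε)

section Affine

variable {c : ℝ} (d : ℝ)

lemma preimage_affine_Ico (hc : 0 < c) (a b : ℝ) :
    (fun x => c * x - d) ⁻¹' Ico a b = Ico ((a + d) / c) ((b + d) / c) := by
  ext x
  simp only [mem_preimage, mem_Ico, div_le_iff₀ hc, lt_div_iff₀ hc]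
  constructor <;> rintro ⟨h₁, h₂⟩ <;> constructor <;> linarith

lemma volume_preimage_affine (hc : 0 < c) (s : Set ℝ) :
    volume ((fun x => c * x - d) ⁻¹' s) = ENNReal.ofReal c⁻¹ * volume s := by
  have : (fun x => c * x - d) ⁻¹' s = (c * ·) ⁻¹' ((· + -d) ⁻¹' s) := by
    ext; simp [sub_eq_add_neg]
  rw [this, Real.volume_preimage_mul_left hc.ne', measure_preimage_add_right,
    abs_of_pos (inv_pos.2 hc)]

lemma strictMono_affine (hc : 0 < c) : StrictMono fun x => c * x - d :=
  fun x y h => by simpa using mul_lt_mul_of_pos_left h hc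

lemma surjective_affine (hc : 0 < c) : Function.Surjective fun x => c * x - d :=
  fun y => ⟨(y + d) / c, by field_simp; ring⟩

end Affine

lemma floor_eq_iff_sub_mem_Ico {y : ℝ} {e : ℤ} : ⌊y⌋ = e ↔ y - e ∈ Ico (0 : ℝ) 1 := by
  rw [Int.floor_eq_iff, mem_Ico, sub_nonneg, sub_lt_iff_lt_add']

lemma Tb_mem_Ico (β x : ℝ) : Tb β x ∈ Ico (0 : ℝ) 1 :=
  ⟨Int.fract_nonneg _, Int.fract_lt_one _⟩

lemma iterate_Tb_mem_Ico (β : ℝ) {x : ℝ} (hx : x ∈ Ico (0 : ℝ) 1) :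
    ∀ n, (Tb β)^[n] x ∈ Ico (0 : ℝ) 1
  | 0 => hx
  | n + 1 => by rw [Function.iterate_succ_apply']; exact Tb_mem_Ico β _

lemma Tb_eq_of_floor_eq {β x : ℝ} {e : ℤ} (h : ⌊β * x⌋ = e) : Tb β x = β * x - e := by
  rw [Tb, Int.fract, h]

lemma bdigit_zero (β x : ℝ) : bdigit β 0 x = ⌊β * x⌋ := rfl

lemma bdigit_add_iterate (β : ℝ) (n k : ℕ) (x : ℝ) :
    bdigit β (n + k) x = bdigit β k ((Tb β)^[n] x) := by
  rw [bdigit, bdigit, add_comm, Function.iterate_add_apply]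

lemma cylinder_subset_Ico (β : ℝ) (n : ℕ) (ε : Fin n → ℤ) : cylinder β n ε ⊆ Ico 0 1 :=
  fun _ hx => hx.1

lemma mem_cylinder_succ_iff {β : ℝ} {n : ℕ} {ε : Fin (n + 1) → ℤ} {x : ℝ} :
    x ∈ cylinder β (n + 1) ε ↔ x ∈ Ico 0 1 ∧ β * x - ε 0 ∈ cylinder β n (Fin.tail ε) := by
  simp only [_root_.cylinder, mem_ofPred_eq, Fin.forall_fin_succ, Fin.val_zero, Fin.val_succ,
    bdigit_zero, add_comm _ 1, bdigit_add_iterate, Function.iterate_one, Fin.tail]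
  constructor
  · rintro ⟨hx, h₀, hs⟩
    rw [← Tb_eq_of_floor_eq h₀]
    exact ⟨hx, Tb_mem_Ico β x, hs⟩
  · rintro ⟨hx, hT, hs⟩
    have h₀ : ⌊β * x⌋ = ε 0 := floor_eq_iff_sub_mem_Ico.2 hT
    rw [← Tb_eq_of_floor_eq h₀] at hs
    exact ⟨hx, h₀, hs⟩

lemma mem_cylinder_append_iff {β : ℝ} {n m : ℕ} {ε : Fin n → ℤ} {ε' : Fin m → ℤ} {x : ℝ} :
    x ∈ cylinder β (n + m) (Fin.append ε ε') ↔
      x ∈ cylinder β n ε ∧ (Tb β)^[n] x ∈ cylinder β m ε' := by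
  simp only [_root_.cylinder, mem_ofPred_eq, Fin.forall_fin_add, Fin.append_left, Fin.append_right,
    Fin.val_castAdd, Fin.val_natAdd, bdigit_add_iterate]
  constructor
  · rintro ⟨hx, h₁, h₂⟩
    exact ⟨⟨hx, h₁⟩, iterate_Tb_mem_Ico β hx n, h₂⟩
  · rintro ⟨⟨hx, h₁⟩, -, h₂⟩
    exact ⟨hx, h₁, h₂⟩

lemma exists_cylinder_eq_Ico {β : ℝ} (hβ : 0 < β) :
    ∀ (n : ℕ) (ε : Fin n → ℤ), ∃ a b, cylinder β n ε = Ico a b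
  | 0, _ => ⟨0, 1, ext fun x => by simp [_root_.cylinder]⟩
  | n + 1, ε => by
    obtain ⟨a, b, hab⟩ := exists_cylinder_eq_Ico hβ n (Fin.tail ε)
    have : cylinder β (n + 1) ε = Ico 0 1 ∩ (fun x => β * x - ε 0) ⁻¹' Ico a b :=
      ext fun _ => hab ▸ mem_cylinder_succ_iff
    rw [this, preimage_affine_Ico _ hβ, Ico_inter_Ico]
    exact ⟨_, _, rfl⟩

lemma iterate_Tb_eq_of_mem_cylinder {β : ℝ} :
    ∀ {n : ℕ} {ε : Fin n → ℤ} {x : ℝ}, x ∈ cylinder β n ε →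
      (Tb β)^[n] x = β ^ n * x - wordValue β n ε
  | 0, _, _, _ => by simp [wordValue]
  | n + 1, ε, x, hx => by
    obtain ⟨-, hs⟩ := mem_cylinder_succ_iff.1 hx
    have h₀ : ⌊β * x⌋ = ε 0 := floor_eq_iff_sub_mem_Ico.2 (cylinder_subset_Ico β n _ hs)
    rw [Function.iterate_succ_apply, Tb_eq_of_floor_eq h₀, iterate_Tb_eq_of_mem_cylinder hs,
      wordValue]
    ring

lemma cylinder_subset_preimage_Ico (β : ℝ) (n : ℕ) (ε : Fin n → ℤ) :
    cylinder β n ε ⊆ (fun x => β ^ n * x - wordValue β n ε) ⁻¹' Ico 0 1 := fun x hx => by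
  rw [mem_preimage, ← iterate_Tb_eq_of_mem_cylinder hx]
  exact iterate_Tb_mem_Ico β hx.1 n

lemma isFull_iff_cylinder_eq {β : ℝ} (hβ : 0 < β) {n : ℕ} {ε : Fin n → ℤ} :
    IsFull β n ε ↔ cylinder β n ε = (fun x => β ^ n * x - wordValue β n ε) ⁻¹' Ico 0 1 := by
  have hβn : 0 < β ^ n := pow_pos hβ n
  have hvol : volume ((fun x => β ^ n * x - wordValue β n ε) ⁻¹' Ico 0 1) =
      ENNReal.ofReal (β ^ (-(n : ℤ))) := by
    rw [volume_preimage_affine _ hβn, Real.volume_Ico, sub_zero, ENNReal.ofReal_one, mul_one,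
      zpow_neg, zpow_natCast]
  constructor
  · rintro ⟨hne, hfull⟩
    obtain ⟨a, b, hab⟩ := exists_cylinder_eq_Ico hβ n ε
    have hsub := cylinder_subset_preimage_Ico β n ε
    have hlen := hfull.trans hvol.symm
    have hlt : a < b := nonempty_Ico.1 (hab ▸ hne)
    rw [hab] at hsub hlen ⊢
    rw [preimage_affine_Ico _ hβn] at hsub hlen ⊢
    obtain ⟨ha, hb⟩ := (Ico_subset_Ico_iff hlt).1 hsub
    rw [Real.volume_Ico, Real.volume_Ico,
      ENNReal.ofReal_eq_ofReal_iff (by linarith) (by linarith)] at hlen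
    rw [le_antisymm ha (by linarith), le_antisymm hb (by linarith)]
  · intro h
    refine ⟨?_, h ▸ hvol⟩
    rw [BAdmissible, h]
    exact (nonempty_Ico.2 zero_lt_one).preimage (surjective_affine _ hβn)

section Concatenation

variable {β : ℝ} {n m : ℕ} {ε : Fin n → ℤ} {ε' : Fin m → ℤ}

lemma cylinder_append_of_isFull (hβ : 0 < β) (hfull : IsFull β n ε) (ε' : Fin m → ℤ) :
    cylinder β (n + m) (Fin.append ε ε') =
      (fun x => β ^ n * x - wordValue β n ε) ⁻¹' cylinder β m ε' := by
  ext x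
  rw [mem_cylinder_append_iff, mem_preimage]
  constructor
  · rintro ⟨hx, hx'⟩
    rwa [← iterate_Tb_eq_of_mem_cylinder hx]
  · intro hx'
    have hx : x ∈ cylinder β n ε :=
      (isFull_iff_cylinder_eq hβ).1 hfull ▸ cylinder_subset_Ico β m ε' hx'
    exact ⟨hx, by rwa [iterate_Tb_eq_of_mem_cylinder hx]⟩

lemma BAdmissible.append_of_isFull (hβ : 0 < β) (hfull : IsFull β n ε)
    (hε' : BAdmissible β m ε') : BAdmissible β (n + m) (Fin.append ε ε') := by
  rw [BAdmissible, cylinder_append_of_isFull hβ hfull]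
  exact hε'.preimage (surjective_affine _ (pow_pos hβ n))

lemma volume_cylinder_append_of_isFull (hβ : 0 < β) (hfull : IsFull β n ε) (ε' : Fin m → ℤ) :
    volume (cylinder β (n + m) (Fin.append ε ε')) =
      volume (cylinder β n ε) * volume (cylinder β m ε') := by
  rw [cylinder_append_of_isFull hβ hfull, volume_preimage_affine _ (pow_pos hβ n), hfull.2,
    zpow_neg, zpow_natCast]

lemma IsFull.append (hβ : 0 < β) (hfull : IsFull β n ε) (hfull' : IsFull β m ε') :
    IsFull β (n + m) (Fin.append ε ε') := by
  refine ⟨hfull'.1.append_of_isFull hβ hfull, ?_⟩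
  rw [volume_cylinder_append_of_isFull hβ hfull, hfull.2, hfull'.2,
    ← ENNReal.ofReal_mul (by positivity), ← zpow_add₀ hβ.ne']
  push_cast
  ring_nf

end Concatenation

lemma dist_lt_of_mem_cylinder {β : ℝ} (hβ : 0 < β) {m : ℕ} {ε : Fin m → ℤ} {x y : ℝ}
    (hx : x ∈ cylinder β m ε) (hy : y ∈ cylinder β m ε) : dist x y < (β ^ m)⁻¹ := by
  have hx' := cylinder_subset_preimage_Ico β m ε hx
  have hy' := cylinder_subset_preimage_Ico β m ε hy
  simp only [mem_preimage, mem_Ico] at hx' hy'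
  rw [Real.dist_eq, abs_sub_lt_iff, ← one_div, lt_div_iff₀ (pow_pos hβ m),
    lt_div_iff₀ (pow_pos hβ m)]
  constructor <;> linarith

lemma Ico_subset_closure_image_iterate {β : ℝ} (hβ : 1 < β) {n : ℕ} {ε : Fin n → ℤ}
    (H : ∀ m : ℕ, 1 ≤ m → ∀ ε' : Fin m → ℤ, BAdmissible β m ε' →
      BAdmissible β (n + m) (Fin.append ε ε')) :
    Ico 0 1 ⊆ closure ((Tb β)^[n] '' cylinder β n ε) := by
  intro y hy
  rw [Metric.mem_closure_iff]
  intro δ hδ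
  obtain ⟨M, hM⟩ := exists_pow_lt_of_lt_one hδ (inv_lt_one_of_one_lt₀ hβ)
  have hy' : y ∈ cylinder β (M + 1) (fun k => bdigit β k y) := ⟨hy, fun _ => rfl⟩
  obtain ⟨x, hx⟩ := H (M + 1) M.succ_pos _ ⟨y, hy'⟩
  rw [mem_cylinder_append_iff] at hx
  refine ⟨_, mem_image_of_mem _ hx.1, ?_⟩
  calc dist y ((Tb β)^[n] x) < (β ^ (M + 1))⁻¹ := dist_lt_of_mem_cylinder (by linarith) hy' hx.2
    _ ≤ β⁻¹ ^ M := by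
      rw [← inv_pow]
      exact pow_le_pow_of_le_one (by positivity) (inv_le_one_of_one_le₀ hβ.le) M.le_succ
    _ < δ := hM

lemma isFull_of_Ico_subset_closure {β : ℝ} (hβ : 0 < β) {n : ℕ} {ε : Fin n → ℤ}
    (h : Ico 0 1 ⊆ closure ((Tb β)^[n] '' cylinder β n ε)) :
    IsFull β n ε := by
  have hφ := strictMono_affine (wordValue β n ε) (pow_pos hβ n)
  obtain ⟨a, b, hab⟩ := exists_cylinder_eq_Ico hβ n ε
  have himage : (Tb β)^[n] '' cylinder β n ε ⊆
      Icc (β ^ n * a - wordValue β n ε) (β ^ n * b - wordValue β n ε) := by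
    rintro _ ⟨x, hx, rfl⟩
    rw [iterate_Tb_eq_of_mem_cylinder hx]
    rw [hab] at hx
    exact ⟨hφ.monotone hx.1, hφ.monotone hx.2.le⟩
  have hIcc : Icc 0 1 ⊆ Icc (β ^ n * a - wordValue β n ε) (β ^ n * b - wordValue β n ε) := by
    rw [← closure_Ico zero_ne_one]
    exact closure_minimal (h.trans (closure_minimal himage isClosed_Icc)) isClosed_Icc
  obtain ⟨ha, hb⟩ := (Icc_subset_Icc_iff zero_le_one).1 hIcc
  rw [isFull_iff_cylinder_eq hβ]
  refine (cylinder_subset_preimage_Ico β n ε).antisymm fun x hx => ?_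
  rw [hab]
  exact ⟨hφ.le_iff_le.1 (ha.trans hx.1), hφ.lt_iff_lt.1 (hx.2.trans_le hb)⟩

theorem stmt3_general (β : ℝ) (hβ : 1 < β) (n : ℕ) (ε : Fin n → ℤ) :
    (IsFull β n ε ↔ ∀ m : ℕ, 1 ≤ m → ∀ ε' : Fin m → ℤ, BAdmissible β m ε' →
      BAdmissible β (n + m) (Fin.append ε ε')) ∧
    (IsFull β n ε → ∀ m : ℕ, 1 ≤ m → ∀ ε' : Fin m → ℤ, BAdmissible β m ε' →
      volume (cylinder β (n + m) (Fin.append ε ε')) =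
        volume (cylinder β n ε) * volume (cylinder β m ε')) ∧
    (IsFull β n ε → ∀ m : ℕ, ∀ ε' : Fin m → ℤ, IsFull β m ε' →
      IsFull β (n + m) (Fin.append ε ε')) := by
  have hβ₀ : 0 < β := one_pos.trans hβ
  refine ⟨⟨fun hfull _ _ _ hε' => hε'.append_of_isFull hβ₀ hfull,
    fun H => isFull_of_Ico_subset_closure hβ₀ (Ico_subset_closure_image_iterate hβ H)⟩,
    fun hfull _ _ ε' _ => volume_cylinder_append_of_isFull hβ₀ hfull ε',
    fun hfull _ _ hfull' => hfull.append hβ₀ hfull'⟩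

/-- A cylinder is full iff all concatenations with admissible words are admissible;
moreover lengths multiply, and concatenations of full words are full. -/
theorem stmt3 (β : ℝ) (hβ : 1 < β) (n : ℕ) (ε : Fin n → ℤ) (hε : BAdmissible β n ε) :
    (IsFull β n ε ↔ ∀ m : ℕ, 1 ≤ m → ∀ ε' : Fin m → ℤ, BAdmissible β m ε' →
      BAdmissible β (n + m) (Fin.append ε ε')) ∧
    (IsFull β n ε → ∀ m : ℕ, 1 ≤ m → ∀ ε' : Fin m → ℤ, BAdmissible β m ε' →
      volume (cylinder β (n + m) (Fin.append ε ε')) =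
        volume (cylinder β n ε) * volume (cylinder β m ε')) ∧
    (IsFull β n ε → ∀ m : ℕ, ∀ ε' : Fin m → ℤ, IsFull β m ε' →
      IsFull β (n + m) (Fin.append ε ε')) :=
  stmt3_general β hβ n ε
end

section
/- Let β > 1 and let Λ_β^n denote the set of full β-admissible sequences of length n. Then: (1) if β is an integer, #Λ_β^n = β^n; (2) if β > 2, #Λ_β^n > ((β−2)/(β−1)) β^n; (3) if 1 < β < 2, #Λ_β^n > (∏_{i=1}^∞ (1 − β^{-i})) β^n. -/
open MeasureTheory Set
open scoped Classical Topology BigOperators ENNReal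

/- auxiliary development -/

/-- extension by zero of a finite word -/
def extz (n : ℕ) (v : Fin n → ℤ) : ℕ → ℤ := fun j => if h : j < n then v ⟨j, h⟩ else 0

lemma extz_coe (n : ℕ) (v : Fin n → ℤ) (k : Fin n) : extz n v k = v k := by
  simp [extz, k.isLt]

lemma extz_cons_zero (m : ℕ) (a : ℤ) (w : Fin m → ℤ) :
    extz (m+1) (Fin.cons a w) 0 = a := by simp [extz]

lemma extz_cons_succ (m : ℕ) (a : ℤ) (w : Fin m → ℤ) :
    (fun j => extz (m+1) (Fin.cons a w) (j+1)) = extz m w := by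
  funext j
  by_cases h : j < m
  · have h' : j + 1 < m + 1 := by omega
    simp only [extz, dif_pos h, dif_pos h']
    exact Fin.cons_succ (α := fun _ => ℤ) a w ⟨j, h⟩
  · simp only [extz, dif_neg h, dif_neg (by omega : ¬ j + 1 < m + 1)]

/-- value of a word, most significant digit first -/
noncomputable def W (β : ℝ) (m : ℕ) (δ : ℕ → ℤ) : ℝ :=
  ∑ j ∈ Finset.range m, (δ j : ℝ) * β ^ (m - 1 - j)

/-- fullness condition -/
def Cond (β : ℝ) (m : ℕ) (δ : ℕ → ℤ) : Prop :=
  (∀ j < m, 0 ≤ δ j) ∧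
    ∀ k < m, (∑ j ∈ Finset.Ico k m, (δ j : ℝ) * β ^ (m - 1 - j)) + 1 ≤ β ^ (m - k)

lemma cond_zero (β : ℝ) (δ : ℕ → ℤ) : Cond β 0 δ :=
  ⟨fun j hj => absurd hj (Nat.not_lt_zero j), fun k hk => absurd hk (Nat.not_lt_zero k)⟩

lemma W_succ (β : ℝ) (m : ℕ) (δ : ℕ → ℤ) :
    W β (m+1) δ = (δ 0 : ℝ) * β ^ m + W β m (fun j => δ (j+1)) := by
  rw [W, Finset.sum_range_succ']
  rw [show m + 1 - 1 - 0 = m by omega, add_comm]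
  congr 1
  apply Finset.sum_congr rfl
  intro i _
  congr 2
  omega

lemma sum_Ico_shift (β : ℝ) (m k : ℕ) (δ : ℕ → ℤ) :
    ∑ j ∈ Finset.Ico (k+1) (m+1), (δ j : ℝ) * β ^ (m + 1 - 1 - j)
      = ∑ j ∈ Finset.Ico k m, ((δ (j+1) : ℝ)) * β ^ (m - 1 - j) := by
  rw [Finset.sum_Ico_eq_sum_range, Finset.sum_Ico_eq_sum_range]
  rw [show m + 1 - (k + 1) = m - k by omega]
  apply Finset.sum_congr rfl
  intro i hi
  simp only [Finset.mem_range] at hi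
  rw [show k + 1 + i = k + i + 1 by omega]
  congr 2
  omega

lemma cond_succ (β : ℝ) (m : ℕ) (δ : ℕ → ℤ) :
    Cond β (m+1) δ ↔
      0 ≤ δ 0 ∧ ((δ 0 : ℝ) * β ^ m + W β m (fun j => δ (j+1)) + 1 ≤ β ^ (m+1)) ∧
        Cond β m (fun j => δ (j+1)) := by
  constructor
  · rintro ⟨h1, h2⟩
    refine ⟨h1 0 (by omega), ?_, fun j hj => h1 (j+1) (by omega), fun k hk => ?_⟩
    · have := h2 0 (by omega)
      rwa [← Finset.range_eq_Ico, ← W, W_succ, Nat.sub_zero] at this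
    · have := h2 (k+1) (by omega)
      rwa [sum_Ico_shift, show m + 1 - (k+1) = m - k by omega] at this
  · rintro ⟨h0, hw, h1, h2⟩
    constructor
    · intro j hj
      cases j with
      | zero => exact h0
      | succ i => exact h1 i (by omega)
    · intro k hk
      cases k with
      | zero =>
        rw [← Finset.range_eq_Ico, ← W, W_succ, Nat.sub_zero]
        exact hw
      | succ i =>
        rw [sum_Ico_shift, show m + 1 - (i+1) = m - i by omega]
        exact h2 i (by omega)

lemma cond_digit_lt {β : ℝ} (hβ : 1 < β) {m : ℕ} {δ : ℕ → ℤ} (h : Cond β m δ) :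
    ∀ k < m, (δ k : ℝ) < β := by
  intro k hk
  have hβ0 : (0:ℝ) < β := lt_trans one_pos hβ
  have hsum := h.2 k hk
  have hsingle : (δ k : ℝ) * β ^ (m - 1 - k) ≤
      ∑ j ∈ Finset.Ico k m, (δ j : ℝ) * β ^ (m - 1 - j) := by
    apply Finset.single_le_sum (f := fun j => (δ j : ℝ) * β ^ (m - 1 - j))
    · intro j hj
      simp only [Finset.mem_Ico] at hj
      exact mul_nonneg (by exact_mod_cast h.1 j hj.2) (le_of_lt (pow_pos hβ0 _))
    · simp [Finset.mem_Ico]; omega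
  have hpow : β ^ (m - k) = β * β ^ (m - 1 - k) := by
    rw [← pow_succ']
    congr 1
    omega
  have : (δ k : ℝ) * β ^ (m - 1 - k) < β * β ^ (m - 1 - k) := by
    rw [← hpow]; nlinarith
  exact lt_of_mul_lt_mul_right this (le_of_lt (pow_pos hβ0 _))

/- analytic core -/

noncomputable def lep (β : ℝ) (n : ℕ) (δ : ℕ → ℤ) : ℝ :=
  ∑ j ∈ Finset.range n, (δ j : ℝ) * (β ^ (j+1))⁻¹

noncomputable def sm (β : ℝ) (n m : ℕ) (δ : ℕ → ℤ) : ℝ :=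
  ∑ j ∈ Finset.Ico m n, (δ j : ℝ) * (β ^ (j+1-m))⁻¹

lemma sm_zero (β : ℝ) (n : ℕ) (δ : ℕ → ℤ) : sm β n 0 δ = lep β n δ := by
  rw [sm, lep, Finset.range_eq_Ico]
  simp

lemma sm_self (β : ℝ) (n : ℕ) (δ : ℕ → ℤ) : sm β n n δ = 0 := by
  simp [sm]

lemma sm_nonneg {β : ℝ} (hβ : 1 < β) {n : ℕ} {δ : ℕ → ℤ} (h1 : ∀ j < n, 0 ≤ δ j) (m : ℕ) :
    0 ≤ sm β n m δ := by
  apply Finset.sum_nonneg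
  intro j hj
  simp only [Finset.mem_Ico] at hj
  exact mul_nonneg (by exact_mod_cast h1 j hj.2)
    (le_of_lt (inv_pos.2 (pow_pos (lt_trans one_pos hβ) _)))

lemma sm_rec {β : ℝ} (hβ : 1 < β) {n m : ℕ} (hm : m < n) (δ : ℕ → ℤ) :
    β * sm β n m δ = (δ m : ℝ) + sm β n (m+1) δ := by
  have hβ0 : (β:ℝ) ≠ 0 := ne_of_gt (lt_trans one_pos hβ)
  rw [sm, Finset.sum_eq_sum_Ico_succ_bot hm]
  rw [mul_add]
  congr 1
  · rw [show m + 1 - m = 1 by omega]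
    field_simp
  · rw [sm, Finset.mul_sum]
    apply Finset.sum_congr rfl
    intro j hj
    simp only [Finset.mem_Ico] at hj
    rw [show j + 1 - m = (j + 1 - (m+1)) + 1 by omega, pow_succ]
    field_simp
    try ring

lemma sm_bound {β : ℝ} (hβ : 1 < β) {n : ℕ} {δ : ℕ → ℤ} (hc : Cond β n δ) :
    ∀ m ≤ n, sm β n m δ + (β ^ (n - m))⁻¹ ≤ 1 := by
  intro m hm
  have hβ0 : (0:ℝ) < β := lt_trans one_pos hβ
  rcases eq_or_lt_of_le hm with rfl | hlt
  · simp [sm_self]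
  · have hP : (0:ℝ) < β ^ (n - m) := pow_pos hβ0 _
    have key : ∑ j ∈ Finset.Ico m n, (δ j : ℝ) * β ^ (n - 1 - j)
        = sm β n m δ * β ^ (n - m) := by
      rw [sm, Finset.sum_mul]
      apply Finset.sum_congr rfl
      intro j hj
      simp only [Finset.mem_Ico] at hj
      rw [mul_assoc]
      congr 1
      rw [inv_mul_eq_div, eq_div_iff (ne_of_gt (pow_pos hβ0 _)), ← pow_add]
      congr 1
      omega
    have h2 := hc.2 m hlt
    rw [key] at h2
    rw [← sub_nonneg]
    have : 1 - (sm β n m δ + (β ^ (n - m))⁻¹) =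
        (β ^ (n-m) - (sm β n m δ * β ^ (n - m) + 1)) / β ^ (n-m) := by
      field_simp
      try ring
    rw [this]
    apply div_nonneg _ (le_of_lt hP)
    linarith

lemma iterate_mem_Ico {β : ℝ} {n : ℕ} {v : Fin n → ℤ} {x : ℝ}
    (hx : x ∈ cylinder β n v) (k : ℕ) : (Tb β)^[k] x ∈ Set.Ico (0:ℝ) 1 := by
  cases k with
  | zero => exact hx.1
  | succ j =>
    rw [Function.iterate_succ_apply']
    exact ⟨Int.fract_nonneg _, Int.fract_lt_one _⟩

/-- the key formula for points of the interval -/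
lemma iter_formula_interval {β : ℝ} (hβ : 1 < β) {n : ℕ} {δ : ℕ → ℤ}
    (h1 : ∀ j < n, 0 ≤ δ j) (hc : Cond β n δ) {x : ℝ}
    (hxl : lep β n δ ≤ x) (hxr : x < lep β n δ + (β ^ n)⁻¹) :
    ∀ m ≤ n, (Tb β)^[m] x = sm β n m δ + (x - lep β n δ) * β ^ m := by
  have hβ0 : (0:ℝ) < β := lt_trans one_pos hβ
  have hd0 : 0 ≤ x - lep β n δ := by linarith
  have hd1 : x - lep β n δ < (β ^ n)⁻¹ := by linarith
  intro m
  induction m with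
  | zero => intro _; simp [sm_zero]
  | succ m ih =>
    intro hm
    have hmn : m < n := by omega
    have hu0 : 0 ≤ sm β n (m+1) δ + (x - lep β n δ) * β ^ (m+1) :=
      add_nonneg (sm_nonneg hβ h1 _) (mul_nonneg hd0 (le_of_lt (pow_pos hβ0 _)))
    have hu1 : sm β n (m+1) δ + (x - lep β n δ) * β ^ (m+1) < 1 := by
      have hb := sm_bound hβ hc (m+1) (by omega)
      have : (x - lep β n δ) * β ^ (m+1) < (β ^ (n - (m+1)))⁻¹ := by
        have hlt : (x - lep β n δ) * β ^ (m+1) < (β ^ n)⁻¹ * β ^ (m+1) :=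
          mul_lt_mul_of_pos_right hd1 (pow_pos hβ0 _)
        have h3 : (β:ℝ) ^ (n - (m+1)) * β ^ (m+1) = β ^ n := by
          rw [← pow_add]; congr 1; omega
        have heq : (β ^ n : ℝ)⁻¹ * β ^ (m+1) = (β ^ (n - (m+1)))⁻¹ := by
          rw [← h3, mul_inv, mul_assoc, inv_mul_cancel₀ (ne_of_gt (pow_pos hβ0 _)), mul_one]
        rwa [heq] at hlt
      linarith
    rw [Function.iterate_succ_apply', ih (by omega)]
    show Int.fract (β * (sm β n m δ + (x - lep β n δ) * β ^ m)) = _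
    rw [mul_add, sm_rec hβ hmn]
    rw [show β * ((x - lep β n δ) * β ^ m) = (x - lep β n δ) * β ^ (m+1) by ring]
    rw [add_assoc, Int.fract_intCast_add, Int.fract_eq_self.2 ⟨hu0, hu1⟩]

lemma cylinder_eq_Ico {β : ℝ} (hβ : 1 < β) {n : ℕ} {v : Fin n → ℤ}
    (hc : Cond β n (extz n v)) :
    cylinder β n v = Set.Ico (lep β n (extz n v)) (lep β n (extz n v) + (β ^ n)⁻¹) := by
  have hβ0 : (0:ℝ) < β := lt_trans one_pos hβ
  set δ := extz n v with hδ
  have h1 : ∀ j < n, 0 ≤ δ j := hc.1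
  ext x
  constructor
  · rintro ⟨hx01, hdig⟩
    -- digits determine the iterate formula
    have key : ∀ m ≤ n, (Tb β)^[m] x = sm β n m δ + (x - lep β n δ) * β ^ m := by
      intro m
      induction m with
      | zero => intro _; simp [sm_zero]
      | succ m ih =>
        intro hm
        have hmn : m < n := by omega
        have hdm : ⌊β * (Tb β)^[m] x⌋ = δ m := by
          have h := hdig ⟨m, hmn⟩
          simp only [bdigit, Fin.val_mk] at h
          rw [hδ, show extz n v m = v ⟨m, hmn⟩ from dif_pos hmn]
          exact h
        rw [Function.iterate_succ_apply', ih (by omega)]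
        show Int.fract (β * (sm β n m δ + (x - lep β n δ) * β ^ m)) = _
        rw [Int.fract]
        rw [← ih (by omega), hdm, ih (by omega)]
        rw [mul_add, sm_rec hβ hmn]
        ring
    have hn := key n (le_refl n)
    rw [sm_self] at hn
    have hT := iterate_mem_Ico (show x ∈ cylinder β n v from ⟨hx01, hdig⟩) n
    rw [hn] at hT
    obtain ⟨hT0, hT1⟩ := hT
    have hP : (0:ℝ) < β ^ n := pow_pos hβ0 _
    constructor
    · nlinarith
    · have : (x - lep β n δ) * β ^ n < 1 := by linarith
      have h2 : x - lep β n δ < (β ^ n)⁻¹ := by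
        rw [inv_eq_one_div]
        exact (lt_div_iff₀ hP).2 this
      linarith
  · rintro ⟨hxl, hxr⟩
    have key := iter_formula_interval hβ h1 hc hxl hxr
    have hd0 : 0 ≤ x - lep β n δ := by linarith
    have hd1 : x - lep β n δ < (β ^ n)⁻¹ := by linarith
    have hlep0 : 0 ≤ lep β n δ := by
      rw [← sm_zero]
      exact sm_nonneg hβ h1 0
    have hx01 : x ∈ Set.Ico (0:ℝ) 1 := by
      constructor
      · linarith
      · have hb := sm_bound hβ hc 0 (Nat.zero_le n)
        rw [Nat.sub_zero, sm_zero] at hb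
        linarith
    refine ⟨hx01, ?_⟩
    intro k
    have hkn : (k:ℕ) < n := k.isLt
    have hk := key k (le_of_lt hkn)
    show (⌊β * (Tb β)^[(k:ℕ)] x⌋ : ℤ) = v k
    rw [hk, mul_add, sm_rec hβ hkn]
    have hu0 : 0 ≤ sm β n ((k:ℕ)+1) δ + (x - lep β n δ) * β ^ ((k:ℕ)+1) :=
      add_nonneg (sm_nonneg hβ h1 _) (mul_nonneg hd0 (le_of_lt (pow_pos hβ0 _)))
    have hu1 : sm β n ((k:ℕ)+1) δ + (x - lep β n δ) * β ^ ((k:ℕ)+1) < 1 := by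
      have hb := sm_bound hβ hc ((k:ℕ)+1) (by omega)
      have hlt : (x - lep β n δ) * β ^ ((k:ℕ)+1) < (β ^ (n - ((k:ℕ)+1)))⁻¹ := by
        have h' : (x - lep β n δ) * β ^ ((k:ℕ)+1) < (β ^ n)⁻¹ * β ^ ((k:ℕ)+1) :=
          mul_lt_mul_of_pos_right hd1 (pow_pos hβ0 _)
        have h3 : (β:ℝ) ^ (n - ((k:ℕ)+1)) * β ^ ((k:ℕ)+1) = β ^ n := by
          rw [← pow_add]; congr 1; omega
        have heq : (β ^ n : ℝ)⁻¹ * β ^ ((k:ℕ)+1) = (β ^ (n - ((k:ℕ)+1)))⁻¹ := by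
          rw [← h3, mul_inv, mul_assoc, inv_mul_cancel₀ (ne_of_gt (pow_pos hβ0 _)), mul_one]
        rwa [heq] at h'
      linarith
    rw [show β * ((x - lep β n δ) * β ^ (k:ℕ)) = (x - lep β n δ) * β ^ ((k:ℕ)+1) from by
      ring]
    rw [add_assoc, Int.floor_intCast_add, Int.floor_eq_zero_iff.2 ⟨hu0, hu1⟩, add_zero]
    rw [hδ, extz_coe]

lemma isFull_of_cond {β : ℝ} (hβ : 1 < β) {n : ℕ} {v : Fin n → ℤ}
    (hc : Cond β n (extz n v)) : IsFull β n v := by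
  have hβ0 : (0:ℝ) < β := lt_trans one_pos hβ
  have hP : (0:ℝ) < (β ^ n)⁻¹ := inv_pos.2 (pow_pos hβ0 _)
  have hcy := cylinder_eq_Ico hβ hc
  constructor
  · refine ⟨lep β n (extz n v), ?_⟩
    rw [hcy]
    exact ⟨le_refl _, by linarith⟩
  · rw [hcy, Real.volume_Ico]
    congr 1
    rw [add_sub_cancel_left, zpow_neg, zpow_natCast]

lemma digit_bounds {β : ℝ} (hβ : 1 < β) {n : ℕ} {v : Fin n → ℤ}
    (hful : BAdmissible β n v) : ∀ k : Fin n, 0 ≤ v k ∧ (v k : ℝ) < β := by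
  obtain ⟨x, hx⟩ := hful
  intro k
  have hvk : v k = ⌊β * (Tb β)^[(k:ℕ)] x⌋ := (hx.2 k).symm
  have hy := iterate_mem_Ico hx (k:ℕ)
  obtain ⟨hy0, hy1⟩ := hy
  have hβ0 : (0:ℝ) < β := lt_trans one_pos hβ
  constructor
  · rw [hvk]
    exact Int.floor_nonneg.2 (mul_nonneg (le_of_lt hβ0) hy0)
  · rw [hvk]
    calc (⌊β * (Tb β)^[(k:ℕ)] x⌋ : ℝ) ≤ β * (Tb β)^[(k:ℕ)] x := Int.floor_le _
    _ < β * 1 := by nlinarith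
    _ = β := mul_one β

/- counting -/

noncomputable def AA (β : ℝ) (m : ℕ) : Finset (Fin m → ℤ) :=
  (Fintype.piFinset fun _ : Fin m => Finset.Icc (0:ℤ) ⌈β⌉).filter
    (fun v => Cond β m (extz m v))

lemma mem_AA {β : ℝ} (hβ : 1 < β) {m : ℕ} {v : Fin m → ℤ} :
    v ∈ AA β m ↔ Cond β m (extz m v) := by
  constructor
  · exact fun h => (Finset.mem_filter.1 h).2
  · intro h
    refine Finset.mem_filter.2 ⟨Fintype.mem_piFinset.2 fun k => Finset.mem_Icc.2 ⟨?_, ?_⟩, h⟩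
    · have := h.1 k k.isLt
      rwa [extz_coe] at this
    · have hlt := cond_digit_lt hβ h k k.isLt
      rw [extz_coe] at hlt
      have : ((v k : ℤ) : ℝ) < (⌈β⌉ : ℝ) := lt_of_lt_of_le hlt (Int.le_ceil β)
      exact le_of_lt (by exact_mod_cast this)

lemma W_extz_cons (β : ℝ) (m : ℕ) (a : ℤ) (w : Fin m → ℤ) :
    W β (m+1) (extz (m+1) (Fin.cons a w)) = (a:ℝ) * β ^ m + W β m (extz m w) := by
  rw [W_succ, extz_cons_zero, extz_cons_succ]

lemma mem_AA_cons {β : ℝ} (hβ : 1 < β) {m : ℕ} {a : ℤ} {w : Fin m → ℤ} :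
    Fin.cons a w ∈ AA β (m+1) ↔
      (0 ≤ a ∧ ((a:ℝ) * β ^ m + W β m (extz m w) + 1 ≤ β ^ (m+1)) ∧ w ∈ AA β m) := by
  rw [mem_AA hβ, mem_AA hβ, cond_succ, extz_cons_zero, extz_cons_succ]

noncomputable def FF (β : ℝ) (m : ℕ) (x : ℝ) : ℝ :=
  ∑ v ∈ AA β m, min 1 (max 0 (x - W β m (extz m v)))

noncomputable def cc (β : ℝ) (m : ℕ) : ℝ :=
  ∏ i ∈ Finset.range m, (1 - (β ^ (i+1))⁻¹)

lemma inv_pow_lt_one {β : ℝ} (hβ : 1 < β) (i : ℕ) : (β ^ (i+1))⁻¹ < 1 := by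
  rw [inv_lt_one_iff₀]
  right
  exact one_lt_pow₀ hβ (Nat.succ_ne_zero i)

lemma inv_pow_pos {β : ℝ} (hβ : 1 < β) (i : ℕ) : 0 < (β ^ (i+1))⁻¹ :=
  inv_pos.2 (pow_pos (lt_trans one_pos hβ) _)

lemma cc_pos {β : ℝ} (hβ : 1 < β) (m : ℕ) : 0 < cc β m :=
  Finset.prod_pos fun i _ => by linarith [inv_pow_lt_one hβ i]

lemma cc_succ (β : ℝ) (m : ℕ) : cc β (m+1) = cc β m * (1 - (β ^ (m+1))⁻¹) :=
  Finset.prod_range_succ _ _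

lemma cc_succ_le {β : ℝ} (hβ : 1 < β) (m : ℕ) : cc β (m+1) ≤ cc β m := by
  rw [cc_succ]
  nlinarith [cc_pos hβ m, inv_pow_pos hβ m]

lemma FF_mono {β : ℝ} (m : ℕ) {x x' : ℝ} (h : x ≤ x') : FF β m x ≤ FF β m x' :=
  Finset.sum_le_sum fun v _ =>
    min_le_min (le_refl 1) (max_le_max (le_refl 0) (by linarith))

lemma FF_le_card (β : ℝ) (m : ℕ) (x : ℝ) : FF β m x ≤ ((AA β m).card : ℝ) := by
  calc FF β m x ≤ ∑ _v ∈ AA β m, (1:ℝ) := Finset.sum_le_sum fun v _ => min_le_left _ _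
  _ = ((AA β m).card : ℝ) := by simp

lemma FF_lb {β : ℝ} (hβ : 1 < β) :
    ∀ m : ℕ, ∀ x : ℝ, 0 ≤ x → x ≤ β ^ m → cc β m * x ≤ FF β m x := by
  have hβ0 : (0:ℝ) < β := lt_trans one_pos hβ
  intro m
  induction m with
  | zero =>
    intro x hx0 hx1
    have hAA0 : AA β 0 = {(Fin.elim0 : Fin 0 → ℤ)} := by
      apply Finset.eq_singleton_iff_unique_mem.2
      exact ⟨(mem_AA hβ).2 (cond_zero β _), fun v _ => funext fun k => k.elim0⟩
    rw [FF, hAA0, Finset.sum_singleton]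
    have hW : W β 0 (extz 0 Fin.elim0) = 0 := by simp [W]
    have hc : cc β 0 = 1 := by simp [cc]
    rw [hW, sub_zero, hc, one_mul]
    simp only [pow_zero] at hx1
    exact le_min hx1 (le_max_right 0 x)
  | succ m hind =>
    intro x hx0 hx1
    have hpm : (0:ℝ) < β ^ m := pow_pos hβ0 m
    have hpm1 : (1:ℝ) < β ^ (m+1) := one_lt_pow₀ hβ (Nat.succ_ne_zero m)
    set y := min x (β ^ (m+1) - 1) with hydef
    have hy0 : 0 ≤ y := le_min hx0 (by linarith)
    have hyx : y ≤ x := min_le_left _ _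
    have hy1 : y ≤ β ^ (m+1) - 1 := min_le_right _ _
    set e := ⌊y / β ^ m⌋₊ with hedef
    have hea : ∀ a : ℕ, a ≤ e → (a:ℝ) * β ^ m ≤ y := by
      intro a ha
      have h1 : (a:ℝ) ≤ y / β ^ m :=
        le_trans (Nat.cast_le.2 ha) (Nat.floor_le (div_nonneg hy0 hpm.le))
      calc (a:ℝ) * β ^ m ≤ (y / β ^ m) * β ^ m := mul_le_mul_of_nonneg_right h1 hpm.le
      _ = y := by field_simp
    have heb : y < ((e:ℝ) + 1) * β ^ m := by
      have h1 : y / β ^ m < (e:ℝ) + 1 := Nat.lt_floor_add_one (y / β ^ m)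
      calc y = (y / β ^ m) * β ^ m := by field_simp
      _ < ((e:ℝ) + 1) * β ^ m := mul_lt_mul_of_pos_right h1 hpm
    -- telescoping identity
    have htel : ∑ a ∈ Finset.range (e+1), min (y - (a:ℝ) * β ^ m) (β ^ m) = y := by
      have key : ∀ a ∈ Finset.range (e+1),
          min (y - (a:ℝ) * β ^ m) (β ^ m)
            = min y (((a:ℕ)+1 : ℝ) * β ^ m) - min y ((a:ℝ) * β ^ m) := by
        intro a ha
        have haa : a ≤ e := by simpa [Nat.lt_succ_iff] using Finset.mem_range.1 ha
        have hay := hea a haa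
        rcases le_total y (((a:ℝ)+1) * β ^ m) with h | h
        · rw [min_eq_left (by push_cast; linarith), min_eq_right hay,
            min_eq_left (by push_cast at h ⊢; linarith)]
        · rw [min_eq_right (by push_cast at h ⊢; linarith), min_eq_right hay,
            min_eq_right (by push_cast at h ⊢; linarith)]
          push_cast
          ring
      rw [Finset.sum_congr rfl key]
      have := Finset.sum_range_sub (fun a : ℕ => min y ((a:ℝ) * β ^ m)) (e+1)
      simp only [Nat.cast_add, Nat.cast_one] at this ⊢
      rw [this]
      rw [min_eq_left (le_of_lt (by push_cast; linarith [heb])), ]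
      simp [min_eq_right hy0]
    -- the sets
    set J : Finset (ℕ × (Fin m → ℤ)) :=
      (Finset.range (e+1) ×ˢ AA β m).filter
        (fun p => ((p.1:ℝ) * β ^ m + W β m (extz m p.2) + 1 ≤ β ^ (m+1))) with hJ
    set φ : ℕ × (Fin m → ℤ) → (Fin (m+1) → ℤ) :=
      (fun p => Fin.cons ((p.1:ℤ)) p.2) with hφ
    have himg : ∀ p ∈ J, φ p ∈ AA β (m+1) := by
      intro p hp
      obtain ⟨hmem, hq⟩ := Finset.mem_filter.1 hp
      obtain ⟨_, hw⟩ := Finset.mem_product.1 hmem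
      rw [hφ]
      simp only []
      rw [mem_AA_cons hβ]
      refine ⟨by positivity, ?_, hw⟩
      push_cast
      exact hq
    have hinj : ∀ p ∈ J, ∀ q ∈ J, φ p = φ q → p = q := by
      intro p _ q _ h
      simp only [hφ] at h
      have h0 := congrFun h 0
      simp only [Fin.cons_zero] at h0
      have h1 : p.2 = q.2 := by
        funext i
        have := congrFun h i.succ
        simpa [Fin.cons_succ] using this
      exact Prod.ext (by exact_mod_cast h0) h1
    calc cc β (m+1) * x ≤ cc β m * y := by
          rcases le_total x (β ^ (m+1) - 1) with h | h
          · rw [hydef, min_eq_left h]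
            exact mul_le_mul_of_nonneg_right (cc_succ_le hβ m) hx0
          · rw [hydef, min_eq_right h]
            have hcc1 : 0 < cc β (m+1) := cc_pos hβ (m+1)
            have : cc β (m+1) * x ≤ cc β (m+1) * β ^ (m+1) :=
              mul_le_mul_of_nonneg_left hx1 hcc1.le
            have heq : cc β (m+1) * β ^ (m+1) = cc β m * (β ^ (m+1) - 1) := by
              rw [cc_succ]
              field_simp
            linarith
    _ = ∑ a ∈ Finset.range (e+1), cc β m * min (y - (a:ℝ) * β ^ m) (β ^ m) := by
          rw [← Finset.mul_sum, htel]
    _ ≤ ∑ a ∈ Finset.range (e+1), FF β m (y - (a:ℝ) * β ^ m) := by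
          apply Finset.sum_le_sum
          intro a ha
          have haa : a ≤ e := by simpa [Nat.lt_succ_iff] using Finset.mem_range.1 ha
          have hz0 : 0 ≤ y - (a:ℝ) * β ^ m := by linarith [hea a haa]
          rcases le_total (y - (a:ℝ) * β ^ m) (β ^ m) with h | h
          · rw [min_eq_left h]
            exact hind _ hz0 h
          · rw [min_eq_right h]
            exact le_trans (hind _ hpm.le le_rfl) (FF_mono m h)
    _ ≤ ∑ a ∈ Finset.range (e+1), ∑ w ∈ AA β m,
          (if (a:ℝ) * β ^ m + W β m (extz m w) + 1 ≤ β ^ (m+1) then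
            min 1 (max 0 (x - ((a:ℝ) * β ^ m + W β m (extz m w)))) else 0) := by
          apply Finset.sum_le_sum
          intro a _
          rw [FF]
          apply Finset.sum_le_sum
          intro w _
          by_cases hq : (a:ℝ) * β ^ m + W β m (extz m w) + 1 ≤ β ^ (m+1)
          · rw [if_pos hq]
            exact min_le_min (le_refl 1) (max_le_max (le_refl 0) (by linarith))
          · rw [if_neg hq]
            push_neg at hq
            have hWbig : y - (a:ℝ) * β ^ m - W β m (extz m w) ≤ 0 := by linarith
            rw [show y - (a:ℝ) * β ^ m - W β m (extz m w)
                = y - (a:ℝ) * β ^ m - W β m (extz m w) from rfl] at hWbig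
            have : max 0 (y - (a:ℝ) * β ^ m - W β m (extz m w)) = 0 :=
              max_eq_left hWbig
            rw [show (y - (a:ℝ) * β ^ m) - W β m (extz m w)
                = y - (a:ℝ) * β ^ m - W β m (extz m w) from by ring, this,
              min_eq_right zero_le_one]
    _ = ∑ p ∈ J, min 1 (max 0 (x - ((p.1:ℝ) * β ^ m + W β m (extz m p.2)))) := by
          rw [hJ, Finset.sum_filter, Finset.sum_product]
    _ = ∑ v ∈ J.image φ,
          min 1 (max 0 (x - W β (m+1) (extz (m+1) v))) := by
          rw [Finset.sum_image hinj]
          apply Finset.sum_congr rfl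
          intro p _
          rw [hφ]
          simp only []
          rw [W_extz_cons]
          norm_cast
    _ ≤ FF β (m+1) x := by
          rw [FF]
          apply Finset.sum_le_sum_of_subset_of_nonneg
          · intro v hv
            obtain ⟨p, hp, rfl⟩ := Finset.mem_image.1 hv
            exact himg p hp
          · intro v _ _
            exact le_min zero_le_one (le_max_left 0 _)

lemma card_low {β : ℝ} (hβ : 1 < β) (n : ℕ) :
    cc β n * β ^ n ≤ (Nat.card {ε : Fin n → ℤ // IsFull β n ε} : ℝ) := by
  have hβ0 : (0:ℝ) < β := lt_trans one_pos hβ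
  have h1 : cc β n * β ^ n ≤ FF β n (β ^ n) := FF_lb hβ n (β ^ n) (pow_pos hβ0 n).le le_rfl
  have h2 : FF β n (β ^ n) ≤ ((AA β n).card : ℝ) := FF_le_card β n _
  have hsub : ↑(AA β n) ⊆ {ε : Fin n → ℤ | IsFull β n ε} := by
    intro v hv
    exact isFull_of_cond hβ ((mem_AA hβ).1 hv)
  have hfin : ({ε : Fin n → ℤ | IsFull β n ε}).Finite := by
    apply Set.Finite.subset
      (Finset.finite_toSet (Fintype.piFinset fun _ : Fin n => Finset.Icc (0:ℤ) ⌈β⌉))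
    intro v hv
    simp only [Finset.mem_coe, Fintype.mem_piFinset, Finset.mem_Icc]
    intro k
    obtain ⟨hl, hr⟩ := digit_bounds hβ hv.1 k
    refine ⟨hl, ?_⟩
    have : ((v k : ℤ) : ℝ) < (⌈β⌉ : ℝ) := lt_of_lt_of_le hr (Int.le_ceil β)
    exact le_of_lt (by exact_mod_cast this)
  have hcard : (AA β n).card ≤ Nat.card {ε : Fin n → ℤ // IsFull β n ε} := by
    have e1 : Nat.card {ε : Fin n → ℤ // IsFull β n ε}
        = ({ε : Fin n → ℤ | IsFull β n ε}).ncard := Nat.card_coe_set_eq _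
    rw [e1, ← Set.ncard_coe_finset]
    exact Set.ncard_le_ncard hsub hfin
  calc cc β n * β ^ n ≤ ((AA β n).card : ℝ) := le_trans h1 h2
  _ ≤ (Nat.card {ε : Fin n → ℤ // IsFull β n ε} : ℝ) := Nat.cast_le.2 hcard

/- final assembly -/

lemma one_sub_sum_le_prod (f : ℕ → ℝ) (h0 : ∀ i, 0 ≤ f i) (h1 : ∀ i, f i ≤ 1) (M : ℕ) :
    1 - ∑ i ∈ Finset.range M, f i ≤ ∏ i ∈ Finset.range M, (1 - f i) := by
  induction M with
  | zero => simp
  | succ M ih =>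
    rw [Finset.sum_range_succ, Finset.prod_range_succ]
    have h2 : (1 - ∑ i ∈ Finset.range M, f i) * (1 - f M)
        ≤ (∏ i ∈ Finset.range M, (1 - f i)) * (1 - f M) :=
      mul_le_mul_of_nonneg_right ih (by linarith [h1 M])
    have h3 : 0 ≤ (∑ i ∈ Finset.range M, f i) * f M :=
      mul_nonneg (Finset.sum_nonneg fun i _ => h0 i) (h0 M)
    nlinarith

lemma geom_tail_lt {β : ℝ} (hβ : 1 < β) (n : ℕ) :
    ∑ i ∈ Finset.range n, (β ^ (i+1))⁻¹ < (β - 1)⁻¹ := by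
  have hβ0 : (0:ℝ) < β := lt_trans one_pos hβ
  have hb1 : (0:ℝ) < β - 1 := by linarith
  have key : (β - 1) * ∑ i ∈ Finset.range n, (β ^ (i+1))⁻¹ = 1 - (β ^ n)⁻¹ := by
    rw [Finset.mul_sum]
    have hterm : ∀ i ∈ Finset.range n,
        (β - 1) * (β ^ (i+1))⁻¹ = (β ^ i)⁻¹ - (β ^ (i+1))⁻¹ := by
      intro i _
      have hp : (β:ℝ) ^ i ≠ 0 := ne_of_gt (pow_pos hβ0 i)
      have hp1 : (β:ℝ) ^ (i+1) ≠ 0 := ne_of_gt (pow_pos hβ0 (i+1))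
      field_simp
      ring
    rw [Finset.sum_congr rfl hterm, Finset.sum_range_sub' (fun i : ℕ => (β ^ i)⁻¹) n]
    simp
  have hpos : (0:ℝ) < (β ^ n)⁻¹ := inv_pos.2 (pow_pos hβ0 n)
  have h2 : (β - 1) * (β - 1)⁻¹ = 1 := mul_inv_cancel₀ (ne_of_gt hb1)
  nlinarith [key, hpos, h2, hb1]

lemma cc_gt {β : ℝ} (hβ : 1 < β) (n : ℕ) : (β - 2) / (β - 1) < cc β n := by
  have h1 := one_sub_sum_le_prod (fun i => (β ^ (i+1))⁻¹)
    (fun i => (inv_pow_pos hβ i).le) (fun i => (inv_pow_lt_one hβ i).le) n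
  have h2 := geom_tail_lt hβ n
  have hb1 : (0:ℝ) < β - 1 := by linarith
  have heq : (β - 2) / (β - 1) = 1 - (β - 1)⁻¹ := by
    field_simp
    ring
  rw [heq]
  have h3 : cc β n = ∏ i ∈ Finset.range n, (1 - (β ^ (i+1))⁻¹) := rfl
  rw [h3]
  calc 1 - (β - 1)⁻¹ < 1 - ∑ i ∈ Finset.range n, (β ^ (i+1))⁻¹ := by linarith
  _ ≤ _ := h1

lemma count_int {β : ℝ} (hβ : 1 < β) (n : ℕ) (b : ℕ) (hb : (b:ℝ) = β) :
    (Nat.card {ε : Fin n → ℤ // IsFull β n ε} : ℝ) = β ^ n := by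
  have hβ0 : (0:ℝ) < β := lt_trans one_pos hβ
  have hset : {ε : Fin n → ℤ | IsFull β n ε}
      = ↑(Fintype.piFinset fun _ : Fin n => Finset.Icc (0:ℤ) ((b:ℤ) - 1)) := by
    ext v
    simp only [Set.mem_setOf_eq, Finset.mem_coe, Fintype.mem_piFinset, Finset.mem_Icc]
    constructor
    · intro hful k
      obtain ⟨hl, hr⟩ := digit_bounds hβ hful.1 k
      refine ⟨hl, ?_⟩
      rw [← hb] at hr
      have : v k < (b:ℤ) := by exact_mod_cast hr
      omega
    · intro hbox
      apply isFull_of_cond hβ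
      constructor
      · intro j hj
        simp only [extz, dif_pos hj]
        exact (hbox ⟨j, hj⟩).1
      · intro k hk
        have hbound : ∀ j ∈ Finset.Ico k n,
            (extz n v j : ℝ) * β ^ (n-1-j) ≤ (β - 1) * β ^ (n-1-j) := by
          intro j hj
          simp only [Finset.mem_Ico] at hj
          have h1 : (extz n v j : ℤ) ≤ (b:ℤ) - 1 := by
            simp only [extz, dif_pos hj.2]
            exact (hbox ⟨j, hj.2⟩).2
          have h2 : (extz n v j : ℝ) ≤ β - 1 := by
            have h3 : ((extz n v j : ℤ) : ℝ) ≤ ((b:ℤ):ℝ) - 1 := by exact_mod_cast h1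
            push_cast at h3
            rw [hb] at h3
            exact h3
          exact mul_le_mul_of_nonneg_right h2 (pow_pos hβ0 _).le
        have hsum := Finset.sum_le_sum hbound
        have hgeom : ∑ j ∈ Finset.Ico k n, (β - 1) * β ^ (n-1-j) = β ^ (n-k) - 1 := by
          rw [Finset.sum_Ico_eq_sum_range]
          have hterm : ∀ i ∈ Finset.range (n - k),
              (β - 1) * β ^ (n-1-(k+i)) = β ^ (n-k-i) - β ^ (n-k-(i+1)) := by
            intro i hi
            simp only [Finset.mem_range] at hi
            rw [show n - k - i = (n-1-(k+i)) + 1 by omega,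
              show n - k - (i+1) = n - 1 - (k+i) by omega, pow_succ]
            ring
          rw [Finset.sum_congr rfl hterm,
            Finset.sum_range_sub' (fun i : ℕ => β ^ (n - k - i)) (n-k)]
          simp
        rw [hgeom] at hsum
        linarith
  have e1 : Nat.card {ε : Fin n → ℤ // IsFull β n ε}
      = ({ε : Fin n → ℤ | IsFull β n ε}).ncard := Nat.card_coe_set_eq _
  have e2 : ({ε : Fin n → ℤ | IsFull β n ε}).ncard
      = (Fintype.piFinset fun _ : Fin n => Finset.Icc (0:ℤ) ((b:ℤ) - 1)).card := by
    rw [hset, Set.ncard_coe_finset]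
  have e3 : (Fintype.piFinset fun _ : Fin n => Finset.Icc (0:ℤ) ((b:ℤ) - 1)).card = b ^ n := by
    rw [Fintype.card_piFinset]
    have : (Finset.Icc (0:ℤ) ((b:ℤ) - 1)).card = b := by
      rw [Int.card_Icc]
      simp
    simp [this]
  rw [e1, e2, e3]
  push_cast
  rw [hb]

lemma tprod_le_cc {β : ℝ} (hβ : 1 < β) (n : ℕ) :
    (∏' i : ℕ, (1 - β ^ (-(i:ℤ) - 1))) ≤ cc β (n+1) := by
  have h0 : ∀ i : ℕ, 0 ≤ 1 - (β ^ (i+1))⁻¹ := fun i => by linarith [inv_pow_lt_one hβ i]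
  have h1 : ∀ i : ℕ, 1 - (β ^ (i+1))⁻¹ ≤ 1 := fun i => by linarith [inv_pow_pos hβ i]
  set g : ℕ → ℝ := fun i => 1 - (β ^ (i+1))⁻¹ with hg
  have hanti : Antitone (fun s : Finset ℕ => ∏ i ∈ s, g i) := by
    intro s t hst
    simp only []
    rw [← Finset.prod_sdiff hst]
    exact mul_le_of_le_one_left (Finset.prod_nonneg fun i _ => h0 i)
      (Finset.prod_le_one (fun i _ => h0 i) (fun i _ => h1 i))
  have hbdd : BddBelow (Set.range (fun s : Finset ℕ => ∏ i ∈ s, g i)) := by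
    refine ⟨0, ?_⟩
    rintro r ⟨s, rfl⟩
    exact Finset.prod_nonneg fun i _ => h0 i
  have hHP : HasProd g (⨅ s : Finset ℕ, ∏ i ∈ s, g i) := tendsto_atTop_ciInf hanti hbdd
  have htp : ∏' i, g i = ⨅ s : Finset ℕ, ∏ i ∈ s, g i := hHP.tprod_eq
  have hle : (⨅ s : Finset ℕ, ∏ i ∈ s, g i) ≤ ∏ i ∈ Finset.range (n+1), g i :=
    ciInf_le hbdd _
  have hcongr : (∏' i : ℕ, (1 - β ^ (-(i:ℤ) - 1))) = ∏' i, g i := by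
    apply tprod_congr
    intro i
    rw [hg]
    simp only []
    congr 1
    rw [show -(i:ℤ) - 1 = -((i+1:ℕ):ℤ) by push_cast; ring, zpow_neg, zpow_natCast]
  rw [hcongr, htp]
  exact le_trans hle (le_of_eq rfl)

/-- Counting full words: (1) integer β: exactly β^n; (2) β > 2: more than
((β−2)/(β−1))β^n; (3) 1 < β < 2: more than (∏_{i≥1}(1−β^{-i}))β^n. -/
theorem stmt4 (β : ℝ) (hβ : 1 < β) (n : ℕ) :
    ((∃ b : ℕ, (b : ℝ) = β) →
      (Nat.card {ε : Fin n → ℤ // IsFull β n ε} : ℝ) = β ^ n) ∧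
    (2 < β →
      ((β - 2) / (β - 1)) * β ^ n < (Nat.card {ε : Fin n → ℤ // IsFull β n ε} : ℝ)) ∧
    (β < 2 →
      (∏' i : ℕ, (1 - β ^ (-(i:ℤ) - 1))) * β ^ n <
        (Nat.card {ε : Fin n → ℤ // IsFull β n ε} : ℝ)) := by
  have hβ0 : (0:ℝ) < β := lt_trans one_pos hβ
  have hpn : (0:ℝ) < β ^ n := pow_pos hβ0 n
  refine ⟨?_, ?_, ?_⟩
  · rintro ⟨b, hb⟩
    exact count_int hβ n b hb
  · intro _
    have h1 := card_low hβ n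
    have h2 := cc_gt hβ n
    nlinarith
  · intro _
    have h1 := card_low hβ n
    have h2 := tprod_le_cc hβ n
    have h3 : cc β (n+1) < cc β n := by
      rw [cc_succ]
      nlinarith [cc_pos hβ n, inv_pow_pos hβ n]
    calc (∏' i : ℕ, (1 - β ^ (-(i:ℤ) - 1))) * β ^ n
        ≤ cc β (n+1) * β ^ n := mul_le_mul_of_nonneg_right h2 hpn.le
    _ < cc β n * β ^ n := mul_lt_mul_of_pos_right h3 hpn
    _ ≤ _ := h1
end

section
/- For every β > 1 and every N ≥ 1, the union over n ≥ N of all nth level full cylinders equals [0,1). Consequently, the limsup set defined by all full cylinders equals [0,1) and has full Lebesgue measure. -/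
open MeasureTheory Set
open scoped Classical Topology BigOperators ENNReal

/-- length parameter of the _root_.cylinder of the n-prefix of x, times β^n -/
noncomputable def tt (β x : ℝ) : ℕ → ℝ
  | 0 => 1
  | (n+1) => min (β * tt β x n - (bdigit β n x : ℝ)) 1

lemma X_mem (β x : ℝ) (hx : x ∈ Set.Ico (0:ℝ) 1) (n : ℕ) :
    (Tb β)^[n] x ∈ Set.Ico (0:ℝ) 1 := by
  induction n with
  | zero => exact hx
  | succ n ih =>
      rw [Function.iterate_succ_apply']
      exact ⟨Int.fract_nonneg _, Int.fract_lt_one _⟩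

lemma X_succ (β x : ℝ) (n : ℕ) :
    (Tb β)^[n+1] x = β * (Tb β)^[n] x - (bdigit β n x : ℝ) := by
  rw [Function.iterate_succ_apply', Tb, bdigit, Int.fract]

lemma master (β x : ℝ) (hβ : 1 < β) (hx : x ∈ Set.Ico (0:ℝ) 1) (n : ℕ) :
    (∀ y, y ∈ _root_.cylinder β n (fun k => bdigit β k x) ↔
      0 ≤ β ^ n * (y - x) + (Tb β)^[n] x ∧ β ^ n * (y - x) + (Tb β)^[n] x < tt β x n) ∧
    (∀ y, y ∈ _root_.cylinder β n (fun k => bdigit β k x) →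
      (Tb β)^[n] y = β ^ n * (y - x) + (Tb β)^[n] x) ∧
    (Tb β)^[n] x < tt β x n ∧ tt β x n ≤ 1 := by
  have hβ0 : (0:ℝ) < β := lt_trans one_pos hβ
  induction n with
  | zero =>
      refine ⟨fun y => ?_, fun y _ => by simp, by simpa [tt] using hx.2, le_refl _⟩
      simp only [_root_.cylinder, mem_setOf_eq, mem_Ico, pow_zero, Function.iterate_zero_apply, tt]
      constructor
      · rintro ⟨⟨h0, h1⟩, -⟩; constructor <;> linarith
      · rintro ⟨h0, h1⟩
        exact ⟨⟨by linarith, by linarith⟩, fun k => k.elim0⟩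
  | succ n ih =>
      obtain ⟨hmem, hT, hXt, ht1⟩ := ih
      have hXn := X_mem β x hx n
      have hd0 : (0:ℝ) ≤ (bdigit β n x : ℝ) := by
        have : (0:ℤ) ≤ bdigit β n x := by
          rw [bdigit]
          exact Int.floor_nonneg.mpr (mul_nonneg hβ0.le hXn.1)
        exact_mod_cast this
      have hbn : (0:ℝ) < β ^ n := pow_pos hβ0 n
      -- split _root_.cylinder
      have hsplit : ∀ y, y ∈ _root_.cylinder β (n+1) (fun k => bdigit β k x) ↔
          y ∈ _root_.cylinder β n (fun k => bdigit β k x) ∧ bdigit β n y = bdigit β n x := by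
        intro y
        simp only [_root_.cylinder, mem_setOf_eq, Fin.forall_fin_succ']
        constructor
        · rintro ⟨hy, h1, h2⟩
          exact ⟨⟨hy, fun k => by simpa using h1 k⟩, by simpa using h2⟩
        · rintro ⟨⟨hy, h1⟩, h2⟩
          exact ⟨hy, fun k => by simpa using h1 k, by simpa using h2⟩
      set d : ℝ := (bdigit β n x : ℝ) with hd
      have hXs : (Tb β)^[n+1] x = β * (Tb β)^[n] x - d := X_succ β x n
      have hts : tt β x (n+1) = min (β * tt β x n - d) 1 := rfl
      -- digit of y in terms of z
      have hdig : ∀ y, y ∈ _root_.cylinder β n (fun k => bdigit β k x) →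
          bdigit β n y = ⌊β * (β ^ n * (y - x) + (Tb β)^[n] x)⌋ := by
        intro y hy; rw [bdigit, hT y hy]
      -- main membership equivalence
      have key : ∀ y, y ∈ _root_.cylinder β (n+1) (fun k => bdigit β k x) ↔
          0 ≤ β ^ (n+1) * (y - x) + (Tb β)^[n+1] x ∧
            β ^ (n+1) * (y - x) + (Tb β)^[n+1] x < tt β x (n+1) := by
        intro y
        rw [hsplit y]
        constructor
        · rintro ⟨hy, hdy⟩
          obtain ⟨hz0, hzt⟩ := (hmem y).mp hy
          set z := β ^ n * (y - x) + (Tb β)^[n] x with hz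
          have hde : (d:ℝ) ≤ β * z ∧ β * z < d + 1 := by
            have h2 := Int.floor_eq_iff.mp ((hdig y hy).symm.trans hdy)
            exact ⟨h2.1, h2.2⟩
          have hz1 : β ^ (n+1) * (y - x) + (Tb β)^[n+1] x = β * z - d := by
            rw [hXs, hz]; ring
          rw [hz1, hts]
          refine ⟨by linarith [hde.1], lt_min ?_ (by linarith [hde.2])⟩
          have : β * z < β * tt β x n := (mul_lt_mul_iff_right₀ hβ0).mpr hzt
          linarith
        · rintro ⟨h0, h1⟩
          set z := β ^ n * (y - x) + (Tb β)^[n] x with hz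
          have hz1 : β ^ (n+1) * (y - x) + (Tb β)^[n+1] x = β * z - d := by
            rw [hXs, hz]; ring
          rw [hz1] at h0 h1
          rw [hts] at h1
          have h1a : β * z - d < β * tt β x n - d := lt_of_lt_of_le h1 (min_le_left _ _)
          have h1b : β * z - d < 1 := lt_of_lt_of_le h1 (min_le_right _ _)
          have hzt : z < tt β x n := by
            have : β * z < β * tt β x n := by linarith
            exact (mul_lt_mul_iff_right₀ hβ0).mp this
          have hz0 : 0 ≤ z := by nlinarith
          have hy : y ∈ _root_.cylinder β n (fun k => bdigit β k x) := (hmem y).mpr ⟨hz0, hzt⟩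
          refine ⟨hy, ?_⟩
          rw [hdig y hy, ← hz]
          rw [Int.floor_eq_iff]
          constructor
          · linarith
          · push_cast; linarith
      refine ⟨key, ?_, ?_, hts ▸ min_le_right _ _⟩
      · intro y hy
        obtain ⟨hyn, hdy⟩ := (hsplit y).mp hy
        rw [Function.iterate_succ_apply', Tb, Int.fract]
        have hTy := hT y hyn
        have hfl : ⌊β * (Tb β)^[n] y⌋ = bdigit β n x := hdy
        rw [hfl, hTy, hXs]
        ring
      · rw [hXs, hts]
        refine lt_min ?_ ?_
        · have : β * (Tb β)^[n] x < β * tt β x n := (mul_lt_mul_iff_right₀ hβ0).mpr hXt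
          linarith
        · have := X_mem β x hx (n+1)
          rw [hXs] at this
          exact this.2


lemma cyl_eq_Ico (β x : ℝ) (hβ : 1 < β) (hx : x ∈ Set.Ico (0:ℝ) 1) (n : ℕ) :
    _root_.cylinder β n (fun k => bdigit β k x) =
      Set.Ico (x - (Tb β)^[n] x / β ^ n)
        (x - (Tb β)^[n] x / β ^ n + tt β x n / β ^ n) := by
  have hβ0 : (0:ℝ) < β := lt_trans one_pos hβ
  have hbn : (0:ℝ) < β ^ n := pow_pos hβ0 n
  have hbn' : (β:ℝ) ^ n ≠ 0 := ne_of_gt hbn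
  ext y
  rw [(master β x hβ hx n).1 y]
  set X := (Tb β)^[n] x
  set t := tt β x n
  have h1 : (X / β ^ n) * β ^ n = X := div_mul_cancel₀ _ hbn'
  have h2 : (t / β ^ n) * β ^ n = t := div_mul_cancel₀ _ hbn'
  simp only [Set.mem_Ico]
  constructor
  · rintro ⟨ha, hb⟩
    constructor
    · nlinarith
    · nlinarith
  · rintro ⟨ha, hb⟩
    constructor
    · nlinarith
    · nlinarith

lemma full_of (β x : ℝ) (hβ : 1 < β) (hx : x ∈ Set.Ico (0:ℝ) 1) (n : ℕ)
    (h : tt β x n = 1) :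
    IsFull β n (fun k => bdigit β k x) ∧ x ∈ _root_.cylinder β n (fun k => bdigit β k x) := by
  have hβ0 : (0:ℝ) < β := lt_trans one_pos hβ
  have hbn : (0:ℝ) < β ^ n := pow_pos hβ0 n
  have hxc : x ∈ _root_.cylinder β n (fun k => bdigit β k x) := by
    rw [(master β x hβ hx n).1 x]
    simpa using ⟨(X_mem β x hx n).1, (master β x hβ hx n).2.2.1⟩
  refine ⟨⟨⟨x, hxc⟩, ?_⟩, hxc⟩
  rw [cyl_eq_Ico β x hβ hx n, Real.volume_Ico, h]
  congr 1
  rw [zpow_neg, zpow_natCast]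
  ring

lemma exists_full (β x : ℝ) (hβ : 1 < β) (hx : x ∈ Set.Ico (0:ℝ) 1) (N : ℕ) :
    ∃ n : ℕ, N ≤ n ∧ tt β x n = 1 := by
  have hβ0 : (0:ℝ) < β := lt_trans one_pos hβ
  by_contra h
  push_neg at h
  have key : ∀ k : ℕ, β ^ k * (tt β x N - (Tb β)^[N] x) ≤
      tt β x (N + k) - (Tb β)^[N + k] x := by
    intro k
    induction k with
    | zero => simp
    | succ k ih =>
        have hne := h (N + k + 1) (by omega)
        have hts : tt β x (N + k + 1) =
            min (β * tt β x (N + k) - (bdigit β (N + k) x : ℝ)) 1 := rfl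
        have hmin : tt β x (N + k + 1) = β * tt β x (N + k) - (bdigit β (N + k) x : ℝ) := by
          rcases le_or_gt 1 (β * tt β x (N + k) - (bdigit β (N + k) x : ℝ)) with hc | hc
          · exact absurd (hts.trans (min_eq_right hc)) hne
          · exact hts.trans (min_eq_left hc.le)
        have hXs := X_succ β x (N + k)
        have hmul := mul_le_mul_of_nonneg_left ih hβ0.le
        have : (N + (k + 1)) = (N + k) + 1 := by omega
        rw [this, hmin, hXs, pow_succ]
        nlinarith
  have hc : 0 < tt β x N - (Tb β)^[N] x :=
    sub_pos.mpr (master β x hβ hx N).2.2.1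
  obtain ⟨k, hk⟩ := pow_unbounded_of_one_lt (1 / (tt β x N - (Tb β)^[N] x)) hβ
  have h1 : 1 < β ^ k * (tt β x N - (Tb β)^[N] x) := by
    rw [div_lt_iff₀ hc] at hk
    linarith
  have h2 : tt β x (N + k) - (Tb β)^[N + k] x ≤ 1 := by
    have := (master β x hβ hx (N + k)).2.2.2
    have := (X_mem β x hx (N + k)).1
    linarith
  linarith [key k]

lemma unions_eq (β : ℝ) (hβ : 1 < β) (N : ℕ) :
    (⋃ n : ℕ, ⋃ _ : N ≤ n, ⋃ ε : Fin n → ℤ, ⋃ _ : IsFull β n ε, _root_.cylinder β n ε) =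
      Set.Ico (0:ℝ) 1 := by
  apply Set.Subset.antisymm
  · simp only [Set.iUnion_subset_iff]
    intro n _ ε _ y hy
    exact hy.1
  · intro y hy
    obtain ⟨n, hn, ht⟩ := exists_full β y hβ hy N
    obtain ⟨hfull, hmem⟩ := full_of β y hβ hy n ht
    exact Set.mem_iUnion.mpr ⟨n, Set.mem_iUnion.mpr ⟨hn,
      Set.mem_iUnion.mpr ⟨_, Set.mem_iUnion.mpr ⟨hfull, hmem⟩⟩⟩⟩


/-- For every N ≥ 1 the union of all full cylinders of levels n ≥ N is all of [0,1);
consequently the limsup set of all full cylinders is [0,1) and has full measure. -/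
theorem stmt5 (β : ℝ) (hβ : 1 < β) :
    (∀ N : ℕ, 1 ≤ N →
      (⋃ n : ℕ, ⋃ _ : N ≤ n, ⋃ ε : Fin n → ℤ, ⋃ _ : IsFull β n ε, cylinder β n ε) =
        Set.Ico (0:ℝ) 1) ∧
    (⋂ N : ℕ, ⋃ n : ℕ, ⋃ _ : N ≤ n, ⋃ ε : Fin n → ℤ, ⋃ _ : IsFull β n ε, cylinder β n ε) =
      Set.Ico (0:ℝ) 1 ∧
    volume (⋂ N : ℕ, ⋃ n : ℕ, ⋃ _ : N ≤ n, ⋃ ε : Fin n → ℤ, ⋃ _ : IsFull β n ε,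
      cylinder β n ε) = 1 := by
  have h2 : (⋂ N : ℕ, ⋃ n : ℕ, ⋃ _ : N ≤ n, ⋃ ε : Fin n → ℤ, ⋃ _ : IsFull β n ε,
      _root_.cylinder β n ε) = Set.Ico (0:ℝ) 1 := by
    simp only [unions_eq β hβ, Set.iInter_const]
  exact ⟨fun N _ => unions_eq β hβ N, h2, by rw [h2, Real.volume_Ico]; norm_num⟩
end

section
/- (Slicing Lemma) Let 0 < k < d be integers, let g be a dimension function, and set f(r) = r^k g(r). Let A be a Borel subset of [0,1)^d. If the set {x₁ ∈ [0,1)^k : H^g({x₂ ∈ [0,1)^{d−k} : (x₁,x₂) ∈ A}) = ∞} has positive H^k-measure, then H^f(A) = ∞. -/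
/-!
If `H^f(A) < ∞`, cover `A` by sets `tₙ` of diameter at most `δ` with `∑ f(diam tₙ)` close to
`H^f(A)`. Spreading the weight `g(diam tₙ)` over the closed projection of `tₙ`, whose volume is at
most `(diam tₙ)^k`, gives a function on `ℝ^k` with integral at most that sum; it dominates the
`δ`-approximate `H^g`-measure of every fibre, since the fibres of the `tₙ` cover the fibres of `A`
and are no larger. Letting `δ → 0`, Fatou's lemma yields a measurable majorant of `x₁ ↦ H^g(A_{x₁})`
with finite integral, so almost every fibre has finite `H^g`-measure; and `H^k` is Lebesgue
measure on `ℝ^k`.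
-/

open MeasureTheory Set
open scoped ENNReal

/-- Hausdorff measure with gauge f (Hausdorff f-measure). -/
noncomputable def hMeas {X : Type*} [EMetricSpace X] [MeasurableSpace X] [BorelSpace X]
    (f : ℝ → ℝ) : Measure X :=
  Measure.mkMetric (fun d : ℝ≥0∞ => ENNReal.ofReal (f d.toReal))

open Filter Metric

section Gauge

variable {X : Type*} [EMetricSpace X]

noncomputable def gaugeSum (f : ℝ → ℝ) (t : ℕ → Set X) : ℝ≥0∞ :=
  ∑' n, ⨆ _ : (t n).Nonempty, ENNReal.ofReal (f (ediam (t n)).toReal)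

theorem exists_cover_gaugeSum_lt [MeasurableSpace X] [BorelSpace X] {f : ℝ → ℝ} {s : Set X}
    {c : ℝ≥0∞} (hc : hMeas f s < c) {δ : ℝ≥0∞} (hδ : 0 < δ) :
    ∃ t : ℕ → Set X, s ⊆ ⋃ n, t n ∧ (∀ n, ediam (t n) ≤ δ) ∧ gaugeSum f t < c := by
  have hδc : (⨅ (t : ℕ → Set X) (_ : s ⊆ iUnion t) (_ : ∀ n, ediam (t n) ≤ δ),
      gaugeSum f t) < c := by
    refine lt_of_le_of_lt ?_ hc
    rw [hMeas, Measure.mkMetric_apply]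
    exact le_iSup₂_of_le δ hδ le_rfl
  simpa only [iInf_lt_iff, exists_prop] using hδc

theorem hMeas_le_liminf [MeasurableSpace X] [BorelSpace X] {f : ℝ → ℝ} {s : Set X}
    {u : ℕ → ℝ≥0∞} (h : ∀ δ > 0, ∀ᶠ n in atTop,
      ∃ t : ℕ → Set X, s ⊆ ⋃ n, t n ∧ (∀ n, ediam (t n) ≤ δ) ∧ gaugeSum f t ≤ u n) :
    hMeas f s ≤ liminf u atTop := by
  rw [hMeas, Measure.mkMetric_apply]
  refine iSup₂_le fun δ hδ => le_liminf_of_le (by isBoundedDefault) ?_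
  filter_upwards [h δ hδ] with n ⟨t, hst, htδ, htu⟩
  exact (iInf₂_le_of_le t hst (iInf_le_of_le htδ le_rfl)).trans htu

end Gauge

theorem ediam_preimage_prodMk_le {α β : Type*} [PseudoEMetricSpace α] [PseudoEMetricSpace β]
    (x : α) (U : Set (α × β)) : ediam (Prod.mk x ⁻¹' U) ≤ ediam U := by
  refine ediam_le fun a ha b hb => ?_
  calc edist a b = edist (x, a) (x, b) := by simp [Prod.edist_eq]
    _ ≤ ediam U := edist_le_ediam_of_mem ha hb

section Slicing

variable {ι : Type*} [Fintype ι] {Y : Type*} [EMetricSpace Y]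

noncomputable def shadowWeight (g : ℝ → ℝ) (t : ℕ → Set ((ι → ℝ) × Y)) (x : ι → ℝ) : ℝ≥0∞ :=
  ∑' n, (closure (Prod.fst '' t n)).indicator
    (fun _ => ENNReal.ofReal (g (ediam (t n)).toReal)) x

theorem measurable_shadowWeight (g : ℝ → ℝ) (t : ℕ → Set ((ι → ℝ) × Y)) :
    Measurable (shadowWeight g t) :=
  Measurable.tsum fun _ => measurable_const.indicator isClosed_closure.measurableSet

theorem lintegral_shadowWeight_le (g : ℝ → ℝ) {t : ℕ → Set ((ι → ℝ) × Y)}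
    (ht : ∀ n, ediam (t n) ≠ ∞) :
    ∫⁻ x, shadowWeight g t x ≤ gaugeSum (fun r => r ^ Fintype.card ι * g r) t := by
  have hmeas : ∀ n, MeasurableSet (closure (Prod.fst '' t n)) :=
    fun _ => isClosed_closure.measurableSet
  simp only [shadowWeight]
  rw [lintegral_tsum fun n => (measurable_const.indicator (hmeas n)).aemeasurable]
  refine ENNReal.tsum_le_tsum fun n => ?_
  rw [lintegral_indicator (hmeas n), setLIntegral_const]
  rcases (t n).eq_empty_or_nonempty with hempty | hne
  · simp [hempty]
  rw [iSup_pos hne]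
  have hvol : volume (closure (Prod.fst '' t n)) ≤
      ENNReal.ofReal ((ediam (t n)).toReal ^ Fintype.card ι) :=
    calc volume (closure (Prod.fst '' t n))
        ≤ ediam (closure (Prod.fst '' t n)) ^ Fintype.card ι := Real.volume_pi_le_diam_pow _
      _ = ediam (Prod.fst '' t n) ^ Fintype.card ι := by rw [ediam_closure]
      _ ≤ ediam (t n) ^ Fintype.card ι := by
        gcongr; simpa using LipschitzWith.prod_fst.ediam_image_le (t n)
      _ = ENNReal.ofReal ((ediam (t n)).toReal ^ Fintype.card ι) := by
        rw [ENNReal.ofReal_pow ENNReal.toReal_nonneg, ENNReal.ofReal_toReal (ht n)]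
  calc ENNReal.ofReal (g (ediam (t n)).toReal) * volume (closure (Prod.fst '' t n))
      ≤ ENNReal.ofReal (g (ediam (t n)).toReal) *
          ENNReal.ofReal ((ediam (t n)).toReal ^ Fintype.card ι) := by gcongr
    _ = _ := by rw [mul_comm, ← ENNReal.ofReal_mul (by positivity)]

theorem gaugeSum_fiber_le_shadowWeight {g : ℝ → ℝ} (hg : Monotone g)
    {t : ℕ → Set ((ι → ℝ) × Y)} (ht : ∀ n, ediam (t n) ≠ ∞) (x : ι → ℝ) :
    gaugeSum g (fun n => Prod.mk x ⁻¹' t n) ≤ shadowWeight g t x := by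
  refine ENNReal.tsum_le_tsum fun n => iSup_le fun ⟨y, hy⟩ => ?_
  have hx : x ∈ closure (Prod.fst '' t n) := subset_closure ⟨(x, y), hy, rfl⟩
  rw [indicator_of_mem hx]
  exact ENNReal.ofReal_le_ofReal <| hg <|
    ENNReal.toReal_mono (ht n) (ediam_preimage_prodMk_le x _)

end Slicing

/- Eilenberg's inequality in upper-integral form: the fibre measures need not be measurable,
so they are bounded by a measurable majorant rather than integrated directly. -/
theorem exists_measurable_ge_hMeas_fiber_lintegral_le {ι : Type*} [Fintype ι] {Y : Type*}
    [EMetricSpace Y] [MeasurableSpace Y] [BorelSpace Y] {g : ℝ → ℝ} (hg : Monotone g)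
    {s : Set ((ι → ℝ) × Y)} {c : ℝ≥0∞} (hc : hMeas (fun r => r ^ Fintype.card ι * g r) s < c) :
    ∃ G : (ι → ℝ) → ℝ≥0∞, Measurable G ∧ (∀ x, hMeas g (Prod.mk x ⁻¹' s) ≤ G x) ∧
      ∫⁻ x, G x ≤ c := by
  have hpos : ∀ n : ℕ, (0 : ℝ≥0∞) < ((n : ℝ≥0∞) + 1)⁻¹ := fun n => by simp
  choose t hcover hdiam hsum using fun n => exists_cover_gaugeSum_lt hc (hpos n)
  have hfin : ∀ n m, ediam (t n m) ≠ ∞ := fun n m => ((hdiam n m).trans_lt (by simp)).ne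
  refine ⟨fun x => liminf (fun n => shadowWeight g (t n) x) atTop,
    .liminf fun n => measurable_shadowWeight g (t n), fun x => hMeas_le_liminf ?_, ?_⟩
  · intro δ hδ
    obtain ⟨N, hN⟩ := ENNReal.exists_inv_nat_lt hδ.ne'
    filter_upwards [eventually_ge_atTop N] with n hn
    have hscale : ((n : ℝ≥0∞) + 1)⁻¹ ≤ δ :=
      le_trans (ENNReal.inv_le_inv.2 (by exact_mod_cast hn.trans n.le_succ)) hN.le
    refine ⟨fun m => Prod.mk x ⁻¹' t n m, fun y hy => ?_,
      fun m => (ediam_preimage_prodMk_le x _).trans ((hdiam n m).trans hscale),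
      gaugeSum_fiber_le_shadowWeight hg (hfin n) x⟩
    simpa using hcover n hy
  · calc ∫⁻ x, liminf (fun n => shadowWeight g (t n) x) atTop
        ≤ liminf (fun n => ∫⁻ x, shadowWeight g (t n) x) atTop :=
          lintegral_liminf_le fun n => measurable_shadowWeight g (t n)
      _ ≤ c := liminf_le_of_frequently_le' <| .of_forall fun n =>
          (lintegral_shadowWeight_le g (hfin n)).trans (hsum n).le

theorem stmt11_general (k l : ℕ)
    (g : ℝ → ℝ) (hg_mono : Monotone g)
    (A : Set ((Fin k → ℝ) × (Fin l → ℝ)))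
    (hpos : 0 < μH[(k:ℝ)]
      {x₁ : Fin k → ℝ | hMeas g {x₂ : Fin l → ℝ | (x₁, x₂) ∈ A} = ∞}) :
    hMeas (fun r => r ^ k * g r) A = ∞ := by
  by_contra hfin
  obtain ⟨G, hG, hfiber_le, hGint⟩ := exists_measurable_ge_hMeas_fiber_lintegral_le
    (ι := Fin k) hg_mono (s := A) (c := hMeas (fun r => r ^ k * g r) A + 1)
    (by simpa using ENNReal.lt_add_right hfin one_ne_zero)
  have hG_lt_top : ∀ᵐ x, G x < ∞ :=
    ae_lt_top hG (hGint.trans_lt (ENNReal.add_lt_top.2 ⟨lt_top_iff_ne_top.2 hfin, by simp⟩)).ne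
  have hvolume : (μH[(k:ℝ)] : Measure (Fin k → ℝ)) = volume := by
    simpa using hausdorffMeasure_pi_real (ι := Fin k)
  refine hpos.ne' (hvolume ▸ measure_mono_null (fun x hx => ?_) (ae_iff.1 hG_lt_top))
  simp [top_le_iff.1 (hx ▸ hfiber_le x)]

/-- Slicing Lemma: if the set of slices x₁ with infinite H^g-measure fiber has positive
H^k-measure, then H^f(A) = ∞, where f(r) = r^k g(r). -/
theorem stmt11 (k l : ℕ) (hk : 0 < k) (hl : 0 < l)
    (g : ℝ → ℝ) (hg_cont : Continuous g) (hg_mono : Monotone g) (hg0 : g 0 = 0)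
    (A : Set ((Fin k → ℝ) × (Fin l → ℝ))) (hA : MeasurableSet A)
    (hAsub : A ⊆ (Set.univ.pi fun _ : Fin k => Set.Ico (0:ℝ) 1) ×ˢ
      (Set.univ.pi fun _ : Fin l => Set.Ico (0:ℝ) 1))
    (hpos : 0 < μH[(k:ℝ)]
      {x₁ : Fin k → ℝ | hMeas g {x₂ : Fin l → ℝ | (x₁, x₂) ∈ A} = ∞}) :
    hMeas (fun r => r ^ k * g r) A = ∞ :=
  stmt11_general k l g hg_mono A hpos
end

section
/- Let t > log 3 and let f be a dimension function with f ≺ 1 (i.e. r ⪯ f(r) and lim_{r→0^+} f(r)/r = ∞). Then min{ f(2^{-n})·(3/2)^{-n}·6^n, f(3^{-n})·6^n, f(2^{-n}e^{-nt})·6^n, f(3^{-n}e^{-n²})·(2^{-n}e^{-nt})/(3^{-n}e^{-n²})·6^n } equals, up to a bounded ratio, min{ f(2^{-n}e^{-nt})·6^n, f(2^{-n})·4^n }, and consequently the series ∑_n min{f(2^{-n}e^{-nt})6^n, f(2^{-n})4^n} converges if and only if ∑_n f(2^{-n}e^{-nt})6^n converges. -/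
open Real

/-- The four quantities occurring in s_n(Ψ,f)·6^n for the example W₂*(t), t > log 3. -/
noncomputable def t1 (f : ℝ → ℝ) (n : ℕ) : ℝ :=
  f ((2:ℝ) ^ (-(n:ℤ))) * (((3:ℝ) ^ (-(n:ℤ))) / ((2:ℝ) ^ (-(n:ℤ)))) * 6 ^ n

noncomputable def t2 (f : ℝ → ℝ) (n : ℕ) : ℝ := f ((3:ℝ) ^ (-(n:ℤ))) * 6 ^ n

noncomputable def t3 (f : ℝ → ℝ) (t : ℝ) (n : ℕ) : ℝ :=
  f ((2:ℝ) ^ (-(n:ℤ)) * Real.exp (-(n:ℝ) * t)) * 6 ^ n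

noncomputable def t4 (f : ℝ → ℝ) (t : ℝ) (n : ℕ) : ℝ :=
  f ((3:ℝ) ^ (-(n:ℤ)) * Real.exp (-(n:ℝ) ^ 2)) *
    (((2:ℝ) ^ (-(n:ℤ)) * Real.exp (-(n:ℝ) * t)) /
      ((3:ℝ) ^ (-(n:ℤ)) * Real.exp (-(n:ℝ) ^ 2))) * 6 ^ n

/-- For t > log 3 and a dimension function f with f ≺ 1, the four-term minimum is
comparable (with bounded ratio) to min{f(2^{-n}e^{-nt})6^n, f(2^{-n})4^n}, and the
series ∑ min{f(2^{-n}e^{-nt})6^n, f(2^{-n})4^n} converges iff ∑ f(2^{-n}e^{-nt})6^n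
converges. -/
theorem stmt16 (t : ℝ) (ht : Real.log 3 < t)
    (f : ℝ → ℝ) (hf_cont : Continuous f) (hf_mono : Monotone f) (hf0 : f 0 = 0)
    (hf1 : ∀ x y : ℝ, 0 < x → x < y → f y / y ≤ f x / x)
    (hf1' : Filter.Tendsto (fun r : ℝ => f r / r) (nhdsWithin 0 (Set.Ioi 0))
      Filter.atTop) :
    (∃ C : ℝ, 0 < C ∧ ∀ n : ℕ, 1 ≤ n →
      (min (min (t1 f n) (t2 f n)) (min (t3 f t n) (t4 f t n)) ≤
        C * min (t3 f t n) (f ((2:ℝ) ^ (-(n:ℤ))) * 4 ^ n) ∧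
       min (t3 f t n) (f ((2:ℝ) ^ (-(n:ℤ))) * 4 ^ n) ≤
        C * min (min (t1 f n) (t2 f n)) (min (t3 f t n) (t4 f t n)))) ∧
    (Summable (fun n : ℕ => min (t3 f t n) (f ((2:ℝ) ^ (-(n:ℤ))) * 4 ^ n)) ↔
      Summable (fun n : ℕ => t3 f t n)) := by
  have h2 : ∀ n : ℕ, (2:ℝ) ^ (-(n:ℤ)) = ((2:ℝ)^n)⁻¹ := fun n => by
    rw [zpow_neg, zpow_natCast]
  have h3 : ∀ n : ℕ, (3:ℝ) ^ (-(n:ℤ)) = ((3:ℝ)^n)⁻¹ := fun n => by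
    rw [zpow_neg, zpow_natCast]
  -- f is positive on positive reals
  have fpos : ∀ r : ℝ, 0 < r → 0 < f r := by
    intro r hr
    by_contra hc
    push_neg at hc
    have he1 : ∀ᶠ x in nhdsWithin 0 (Set.Ioi 0), 1 ≤ f x / x :=
      hf1'.eventually (Filter.eventually_ge_atTop 1)
    have he2 : ∀ᶠ x in nhdsWithin 0 (Set.Ioi 0), x < r :=
      Filter.Eventually.filter_mono nhdsWithin_le_nhds (eventually_lt_nhds hr)
    have he3 : ∀ᶠ x in nhdsWithin (0:ℝ) (Set.Ioi 0), x ∈ Set.Ioi (0:ℝ) :=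
      eventually_mem_nhdsWithin
    obtain ⟨x, hx1, hx2, hx3⟩ := (he1.and (he2.and he3)).exists
    have hxpos : (0:ℝ) < x := hx3
    have hfx : f x ≤ 0 := le_trans (hf_mono hx2.le) hc
    have : f x / x ≤ 0 := div_nonpos_of_nonpos_of_nonneg hfx hxpos.le
    linarith
  set C := Real.exp (t^2/4) with hCdef
  have hC1 : (1:ℝ) ≤ C := Real.one_le_exp (by positivity)
  have hCpos : (0:ℝ) < C := lt_of_lt_of_le one_pos hC1
  have hCe : C * Real.exp (-(t^2/4)) = 1 := by
    rw [hCdef, ← Real.exp_add]; norm_num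
  -- the key pointwise facts
  have key : ∀ n : ℕ,
      t3 f t n ≤ t2 f n ∧ t3 f t n ≤ C * t4 f t n ∧ 0 < t3 f t n ∧
      0 < f ((2:ℝ) ^ (-(n:ℤ))) * 4 ^ n ∧ 0 < t2 f n ∧ 0 < t4 f t n ∧
      t1 f n = f ((2:ℝ) ^ (-(n:ℤ))) * 4 ^ n := by
    intro n
    set a : ℝ := (2:ℝ) ^ (-(n:ℤ)) * Real.exp (-(n:ℝ) * t) with hadef
    set b : ℝ := (3:ℝ) ^ (-(n:ℤ)) * Real.exp (-(n:ℝ) ^ 2) with hbdef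
    have ha : 0 < a := by rw [hadef, h2]; positivity
    have hb : 0 < b := by rw [hbdef, h3]; positivity
    have hp2 : (0:ℝ) < (2:ℝ) ^ (-(n:ℤ)) := by rw [h2]; positivity
    have hp3 : (0:ℝ) < (3:ℝ) ^ (-(n:ℤ)) := by rw [h3]; positivity
    -- a ≤ 3^{-n}
    have hexp3 : Real.exp (-(n:ℝ) * t) ≤ ((3:ℝ)^n)⁻¹ := by
      have h1 : Real.exp (-(n:ℝ) * t) = (Real.exp (-t))^n := by
        rw [show -(n:ℝ) * t = (n:ℝ) * (-t) by ring, Real.exp_nat_mul]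
      have h2' : Real.exp (-t) ≤ 3⁻¹ := by
        rw [Real.exp_neg]
        have : (3:ℝ) < Real.exp t := by
          calc (3:ℝ) = Real.exp (Real.log 3) := (Real.exp_log (by norm_num)).symm
            _ < Real.exp t := Real.exp_lt_exp.mpr ht
        exact inv_anti₀ (by norm_num) this.le
      calc Real.exp (-(n:ℝ) * t) = (Real.exp (-t))^n := h1
        _ ≤ (3⁻¹ : ℝ)^n := pow_le_pow_left₀ (Real.exp_nonneg _) h2' n
        _ = ((3:ℝ)^n)⁻¹ := by rw [inv_pow]
    have ha3 : a ≤ (3:ℝ) ^ (-(n:ℤ)) := by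
      rw [hadef, h2, h3]
      calc ((2:ℝ)^n)⁻¹ * Real.exp (-(n:ℝ) * t) ≤ 1 * ((3:ℝ)^n)⁻¹ :=
            mul_le_mul (inv_le_one_of_one_le₀ (one_le_pow₀ (by norm_num))) hexp3
              (Real.exp_nonneg _) (by norm_num)
        _ = ((3:ℝ)^n)⁻¹ := one_mul _
    -- ratio bound
    have hratio : Real.exp (-(t^2/4)) ≤ a / b := by
      have hab : a / b = ((3:ℝ)^n / (2:ℝ)^n) * Real.exp ((n:ℝ)^2 - (n:ℝ)*t) := by
        rw [hadef, hbdef, h2, h3, Real.exp_sub]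
        have e2 : Real.exp (-(n:ℝ)^2) = (Real.exp ((n:ℝ)^2))⁻¹ := by rw [Real.exp_neg]
        have e1 : Real.exp (-(n:ℝ)*t) = (Real.exp ((n:ℝ)*t))⁻¹ := by rw [← Real.exp_neg]; ring_nf
        rw [e2, e1]
        have p1 : ((2:ℝ)^n) ≠ 0 := by positivity
        have p2 : ((3:ℝ)^n) ≠ 0 := by positivity
        have p3 : Real.exp ((n:ℝ)^2) ≠ 0 := Real.exp_ne_zero _
        have p4 : Real.exp ((n:ℝ)*t) ≠ 0 := Real.exp_ne_zero _
        field_simp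
      rw [hab]
      calc Real.exp (-(t^2/4)) = 1 * Real.exp (-(t^2/4)) := (one_mul _).symm
        _ ≤ ((3:ℝ)^n / (2:ℝ)^n) * Real.exp ((n:ℝ)^2 - (n:ℝ)*t) := by
            apply mul_le_mul
            · rw [le_div_iff₀ (by positivity)]
              rw [one_mul]
              exact pow_le_pow_left₀ (by norm_num) (by norm_num) n
            · exact Real.exp_le_exp.mpr (by nlinarith [sq_nonneg ((n:ℝ) - t/2)])
            · exact Real.exp_nonneg _
            · positivity
    -- positivity of the quantities
    have ht3pos : 0 < t3 f t n := by
      simp only [t3]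
      exact mul_pos (fpos a ha) (by positivity)
    have ht4pos : 0 < t4 f t n := by
      simp only [t4]
      exact mul_pos (mul_pos (fpos b hb) (div_pos ha hb)) (by positivity)
    have ht2pos : 0 < t2 f n := by
      simp only [t2]
      exact mul_pos (fpos _ hp3) (by positivity)
    have ht1'pos : 0 < f ((2:ℝ) ^ (-(n:ℤ))) * 4 ^ n :=
      mul_pos (fpos _ hp2) (by positivity)
    -- t3 ≤ t2
    have h32 : t3 f t n ≤ t2 f n := by
      simp only [t2, t3]
      exact mul_le_mul_of_nonneg_right (hf_mono ha3) (by positivity)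
    -- t3 ≤ C * t4
    have h34 : t3 f t n ≤ C * t4 f t n := by
      have ht4eq : t4 f t n = f b * (a / b) * 6 ^ n := rfl
      have ht3eq : t3 f t n = f a * 6 ^ n := rfl
      rcases le_or_gt b a with hba | hab
      · -- b ≤ a : use hf1
        have hfab : f a ≤ f b * (a / b) := by
          rcases eq_or_lt_of_le hba with heq | hlt
          · rw [← heq, div_self (ne_of_gt hb), mul_one]
          · have hd := hf1 b a hb hlt
            calc f a = (f a / a) * a := by field_simp
              _ ≤ (f b / b) * a := mul_le_mul_of_nonneg_right hd ha.le
              _ = f b * (a / b) := by rw [div_mul_eq_mul_div, mul_div_assoc]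
        calc t3 f t n = f a * 6 ^ n := ht3eq
          _ ≤ f b * (a / b) * 6 ^ n :=
              mul_le_mul_of_nonneg_right hfab (by positivity)
          _ = t4 f t n := ht4eq.symm
          _ ≤ C * t4 f t n := le_mul_of_one_le_left ht4pos.le hC1
      · -- a < b : use monotonicity and the ratio bound
        have hstep : Real.exp (-(t^2/4)) * t3 f t n ≤ t4 f t n := by
          rw [ht3eq, ht4eq]
          have : Real.exp (-(t^2/4)) * f a ≤ f b * (a / b) := by
            calc Real.exp (-(t^2/4)) * f a = f a * Real.exp (-(t^2/4)) := by ring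
              _ ≤ f b * (a / b) :=
                mul_le_mul (hf_mono hab.le) hratio (Real.exp_nonneg _) (fpos b hb).le
          calc Real.exp (-(t^2/4)) * (f a * 6 ^ n)
              = (Real.exp (-(t^2/4)) * f a) * 6 ^ n := by ring
            _ ≤ f b * (a / b) * 6 ^ n :=
                mul_le_mul_of_nonneg_right this (by positivity)
        calc t3 f t n = C * (Real.exp (-(t^2/4)) * t3 f t n) := by
              rw [← mul_assoc, hCe, one_mul]
          _ ≤ C * t4 f t n := mul_le_mul_of_nonneg_left hstep hCpos.le
    -- t1 = f(2^{-n}) * 4^n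
    have h1eq : t1 f n = f ((2:ℝ) ^ (-(n:ℤ))) * 4 ^ n := by
      simp only [t1]
      rw [mul_assoc]
      congr 1
      rw [h2, h3, show (6:ℝ) = 2*3 by norm_num, show (4:ℝ) = 2*2 by norm_num,
        mul_pow, mul_pow]
      have p1 : ((2:ℝ)^n) ≠ 0 := by positivity
      have p2 : ((3:ℝ)^n) ≠ 0 := by positivity
      field_simp
    exact ⟨h32, h34, ht3pos, ht1'pos, ht2pos, ht4pos, h1eq⟩
  constructor
  · refine ⟨C, hCpos, fun n _ => ?_⟩
    obtain ⟨hle2, hle4, ht3p, ht1p, ht2p, ht4p, ht1eq⟩ := key n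
    constructor
    · have hm : min (min (t1 f n) (t2 f n)) (min (t3 f t n) (t4 f t n)) ≤
          min (t3 f t n) (f ((2:ℝ) ^ (-(n:ℤ))) * 4 ^ n) := by
        apply le_min
        · exact (min_le_right _ _).trans (min_le_left _ _)
        · exact ((min_le_left _ _).trans (min_le_left _ _)).trans (le_of_eq ht1eq)
      exact hm.trans (le_mul_of_one_le_left (le_min ht3p.le ht1p.le) hC1)
    · rw [mul_min_of_nonneg _ _ hCpos.le, mul_min_of_nonneg _ _ hCpos.le,
        mul_min_of_nonneg _ _ hCpos.le]
      refine le_min (le_min ?_ ?_) (le_min ?_ ?_)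
      · rw [ht1eq]
        exact (min_le_right _ _).trans (le_mul_of_one_le_left ht1p.le hC1)
      · exact (min_le_left _ _).trans (hle2.trans (le_mul_of_one_le_left ht2p.le hC1))
      · exact (min_le_left _ _).trans (le_mul_of_one_le_left ht3p.le hC1)
      · exact (min_le_left _ _).trans hle4
  · constructor
    · intro hsum
      have hg : Filter.Tendsto (fun n : ℕ => (2:ℝ) ^ (-(n:ℤ))) Filter.atTop
          (nhdsWithin 0 (Set.Ioi 0)) := by
        apply tendsto_nhdsWithin_of_tendsto_nhds_of_eventually_within
        · have heq : (fun n : ℕ => (2:ℝ) ^ (-(n:ℤ))) = fun n : ℕ => ((2:ℝ)⁻¹)^n :=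
            funext fun n => by rw [h2, inv_pow]
          rw [heq]
          exact tendsto_pow_atTop_nhds_zero_of_lt_one (by norm_num) (by norm_num)
        · exact Filter.Eventually.of_forall fun n => by
            simp only [Set.mem_Ioi]
            rw [h2]; positivity
      have hev1 : ∀ᶠ n : ℕ in Filter.atTop,
          1 ≤ f ((2:ℝ) ^ (-(n:ℤ))) / (2:ℝ) ^ (-(n:ℤ)) :=
        (hf1'.comp hg).eventually (Filter.eventually_ge_atTop 1)
      have hev2 : ∀ᶠ n : ℕ in Filter.atTop,
          min (t3 f t n) (f ((2:ℝ) ^ (-(n:ℤ))) * 4 ^ n) < 1 :=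
        hsum.tendsto_atTop_zero.eventually_lt_const (by norm_num)
      have hev : ∀ᶠ n : ℕ in Filter.atTop,
          t3 f t n = min (t3 f t n) (f ((2:ℝ) ^ (-(n:ℤ))) * 4 ^ n) := by
        filter_upwards [hev1, hev2] with n h1 hlt
        have hp : (0:ℝ) < (2:ℝ) ^ (-(n:ℤ)) := by rw [h2]; positivity
        have hone : (1:ℝ) ≤ f ((2:ℝ) ^ (-(n:ℤ))) * 4 ^ n := by
          have h4 : (1:ℝ) ≤ (2:ℝ) ^ (-(n:ℤ)) * 4 ^ n := by
            rw [h2, show (4:ℝ) = 2*2 by norm_num, mul_pow]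
            have hx : ((2:ℝ)^n)⁻¹ * ((2:ℝ)^n * (2:ℝ)^n) = (2:ℝ)^n := by
              field_simp
            rw [hx]
            exact one_le_pow₀ (by norm_num)
          calc (1:ℝ) ≤ (2:ℝ) ^ (-(n:ℤ)) * 4 ^ n := h4
            _ ≤ (f ((2:ℝ) ^ (-(n:ℤ))) / (2:ℝ) ^ (-(n:ℤ))) *
                ((2:ℝ) ^ (-(n:ℤ)) * 4 ^ n) := le_mul_of_one_le_left (by positivity) h1
            _ = f ((2:ℝ) ^ (-(n:ℤ))) * 4 ^ n := by field_simp
        rcases min_cases (t3 f t n) (f ((2:ℝ) ^ (-(n:ℤ))) * 4 ^ n) with ⟨he, _⟩ | ⟨he, _⟩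
        · exact he.symm
        · linarith
      obtain ⟨N, hN⟩ := Filter.eventually_atTop.mp hev
      have hsum' : Summable (fun n : ℕ =>
          min (t3 f t (n + N)) (f ((2:ℝ) ^ (-((n + N : ℕ):ℤ))) * 4 ^ (n + N))) :=
        (summable_nat_add_iff N).mpr hsum
      have hsum'' : Summable (fun n : ℕ => t3 f t (n + N)) :=
        hsum'.congr fun n => (hN (n + N) (Nat.le_add_left N n)).symm
      exact (summable_nat_add_iff N).mp hsum''
    · intro hsum
      refine Summable.of_nonneg_of_le (fun n => ?_) (fun n => min_le_left _ _) hsum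
      obtain ⟨_, _, ht3p, ht1p, _, _, _⟩ := key n
      exact le_min ht3p.le ht1p.le
end

section
/- Let β > 1, h : [0,1) → [0,1] Lipschitz, ψ : ℕ → ℝ^+, and for n ≥ 1 let Ẽ_n = ⋃_{ε_n ∈ Λ_β^n} {x ∈ I_{n,β}(ε_n) : |T_β^n x − h(x)| < ψ(n)}. Then for any full word ε_k ∈ Λ_β^k and any M > N ≥ k, one has ∑_{n,m=N}^M λ(I_{k,β}(ε_k) ∩ Ẽ_m ∩ Ẽ_n) ≤ C |I_{k,β}(ε_k)| ((∑_{n=N}^M ψ(n))² + ∑_{n=N}^M ψ(n)) for a constant C independent of ε_k, N, M. -/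
/-!
Inside a cylinder `I_n(ε)` the map `T_β^n` is the affine map `x ↦ β^n x - const`, so once
`β^n` beats the Lipschitz constant of `h` the set `{x ∈ I_n(ε) : |T_β^n x - h x| < ψ n}` is
contained in an interval of length `≍ ψ n β^{-n}`, i.e. it has relative measure `≍ ψ n` in
`I_n(ε)`. Counting the full cylinders of level `n` that meet a given set (they are disjoint
and each has measure `β^{-n}`), this gives `λ(J ∩ Ẽ_m) ≲ ψ m (|J| + β^{-m})` for an interval
`J`, and then, applied to the pieces of `Ẽ_n` (intervals of length `≲ ψ n β^{-n}`) inside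
the full cylinder `I_k(ε_k)`, `λ(I_k(ε_k) ∩ Ẽ_n ∩ Ẽ_m) ≲ β^{-k} (ψ n ψ m + ψ m β^{n-m})`
for `k ≤ n ≤ m`. Summing over `N ≤ n, m ≤ M`, the geometric factor `β^{n-m}` turns the
second term into `O(∑ ψ)`.
-/

open MeasureTheory Set
open scoped Classical Topology BigOperators ENNReal

/-- Ẽ_n: union over full words of level n of {x ∈ I_{n,β}(ε) : |T_β^n x − h(x)| < ψ(n)}. -/
def Et (β : ℝ) (ψ : ℕ → ℝ) (h : ℝ → ℝ) (n : ℕ) : Set ℝ :=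
  ⋃ ε : Fin n → ℤ, ⋃ _ : IsFull β n ε, {x ∈ cylinder β n ε | |(Tb β)^[n] x - h x| < ψ n}

open Function

theorem MeasureTheory.measure_le_div_mul_of_disjoint_cover {α ι : Type*} [MeasurableSpace α]
    [Countable ι] {μ : Measure α} {S B : Set α} {A : ι → Set α}
    (hAm : ∀ i, MeasurableSet (A i)) (hAd : Pairwise (Disjoint on A)) (hS : S ⊆ ⋃ i, A i)
    {c v : ℝ≥0∞} (hv₀ : v ≠ 0) (hv : v ≠ ∞)
    (hpiece : ∀ i, (S ∩ A i).Nonempty → A i ⊆ B ∧ μ (S ∩ A i) ≤ c ∧ v ≤ μ (A i)) :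
    μ S ≤ c / v * μ B := by
  have hle : ∀ i, μ (S ∩ A i) ≤ c / v * μ.restrict B (A i) := by
    intro i
    rcases (S ∩ A i).eq_empty_or_nonempty with hempty | hne
    · simp [hempty]
    obtain ⟨hAB, hc, hvA⟩ := hpiece i hne
    rw [Measure.restrict_apply (hAm i), inter_eq_left.2 hAB]
    calc μ (S ∩ A i) ≤ c := hc
      _ = c / v * v := (ENNReal.div_mul_cancel hv₀ hv).symm
      _ ≤ c / v * μ (A i) := by gcongr
  calc μ S ≤ μ (⋃ i, S ∩ A i) := measure_mono fun x hx => by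
        simpa [hx] using hS hx
    _ ≤ ∑' i, μ (S ∩ A i) := measure_iUnion_le _
    _ ≤ ∑' i, c / v * μ.restrict B (A i) := ENNReal.tsum_le_tsum hle
    _ = c / v * μ.restrict B (⋃ i, A i) := by rw [ENNReal.tsum_mul_left, measure_iUnion hAd hAm]
    _ ≤ c / v * μ B := by
        gcongr c / v * ?_
        exact (measure_mono (subset_univ _)).trans_eq (Measure.restrict_apply_univ B)

section Cylinder

variable {β : ℝ} {n : ℕ}

theorem Tb_iterate_mem_Ico {x : ℝ} (hx : x ∈ Ico (0:ℝ) 1) : ∀ n, (Tb β)^[n] x ∈ Ico (0:ℝ) 1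
  | 0 => hx
  | n + 1 => by
    rw [Function.iterate_succ_apply']
    exact ⟨Int.fract_nonneg _, Int.fract_lt_one _⟩

theorem Tb_iterate_sub_Tb_iterate {x y : ℝ} (hd : ∀ i < n, bdigit β i x = bdigit β i y) :
    (Tb β)^[n] x - (Tb β)^[n] y = β ^ n * (x - y) := by
  induction n with
  | zero => simp
  | succ n ih =>
    have hfloor : ⌊β * (Tb β)^[n] x⌋ = ⌊β * (Tb β)^[n] y⌋ := hd n n.lt_succ_self
    simp only [Function.iterate_succ_apply', Tb, ← Int.self_sub_floor, hfloor]
    rw [pow_succ', mul_assoc, ← ih fun i hi => hd i (hi.trans n.lt_succ_self)]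
    ring

theorem eq_of_mem_cylinder {ε ε' : Fin n → ℤ} {x : ℝ} (hx : x ∈ cylinder β n ε)
    (hx' : x ∈ cylinder β n ε') : ε = ε' :=
  funext fun k => (hx.2 k).symm.trans (hx'.2 k)

theorem pairwise_disjoint_cylinder : Pairwise (Disjoint on _root_.cylinder β n) :=
  fun _ _ hne => disjoint_left.2 fun _ hx hx' => hne (eq_of_mem_cylinder hx hx')

theorem measurableSet_cylinder (ε : Fin n → ℤ) : MeasurableSet (cylinder β n ε) := by
  have hTb : Measurable (Tb β) := measurable_fract.comp (measurable_const_mul β)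
  have hdigit (k : ℕ) : Measurable (bdigit β k) :=
    Int.measurable_floor.comp ((measurable_const_mul β).comp (hTb.iterate k))
  have : _root_.cylinder β n ε = Ico 0 1 ∩ ⋂ k : Fin n, bdigit β k ⁻¹' {ε k} := by
    ext x
    simp [_root_.cylinder]
  rw [this]
  exact measurableSet_Ico.inter <| .iInter fun k => hdigit k (measurableSet_singleton _)

theorem iterate_sub_iterate_of_mem_cylinder {ε : Fin n → ℤ} {x y : ℝ}
    (hx : x ∈ cylinder β n ε) (hy : y ∈ cylinder β n ε) :
    (Tb β)^[n] x - (Tb β)^[n] y = β ^ n * (x - y) :=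
  Tb_iterate_sub_Tb_iterate fun i hi => (hx.2 ⟨i, hi⟩).trans (hy.2 ⟨i, hi⟩).symm

theorem abs_sub_le_of_mem_cylinder (hβ : 0 < β) {ε : Fin n → ℤ} {x y : ℝ}
    (hx : x ∈ cylinder β n ε) (hy : y ∈ cylinder β n ε) : |x - y| ≤ (β ^ n)⁻¹ := by
  have hxn := Tb_iterate_mem_Ico (β := β) hx.1 n
  have hyn := Tb_iterate_mem_Ico (β := β) hy.1 n
  have h : |β ^ n * (x - y)| ≤ 1 := by
    rw [← iterate_sub_iterate_of_mem_cylinder hx hy, abs_le]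
    constructor <;> linarith [hxn.1, hxn.2, hyn.1, hyn.2]
  rw [abs_mul, abs_of_pos (pow_pos hβ n)] at h
  rwa [← one_div, le_div_iff₀' (pow_pos hβ n)]

theorem cylinder_subset_cylinder {k : ℕ} (hkn : k ≤ n) {ε : Fin n → ℤ} {εk : Fin k → ℤ} {x : ℝ}
    (hx : x ∈ cylinder β n ε) (hxk : x ∈ cylinder β k εk) :
    cylinder β n ε ⊆ cylinder β k εk := fun y hy =>
  ⟨hy.1, fun i => by
    have hi : (i : ℕ) < n := i.2.trans_le hkn
    rw [← hxk.2 i]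
    exact (hy.2 ⟨i, hi⟩).trans (hx.2 ⟨i, hi⟩).symm⟩

theorem IsFull.volume_cylinder {ε : Fin n → ℤ} (hε : IsFull β n ε) :
    volume (cylinder β n ε) = ENNReal.ofReal (β ^ n)⁻¹ := by
  rw [hε.2, zpow_neg, zpow_natCast]

end Cylinder

section GeometricSums

variable {r : ℝ} {a : ℕ → ℝ}

def geomWeight (a : ℕ → ℝ) (r : ℝ) (n m : ℕ) : ℝ :=
  if n ≤ m then a m * r ^ (m - n) else 0

theorem geomWeight_nonneg (ha : ∀ n, 0 ≤ a n) (hr₀ : 0 ≤ r) (n m : ℕ) :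
    0 ≤ geomWeight a r n m := by
  unfold geomWeight
  split_ifs
  exacts [mul_nonneg (ha m) (pow_nonneg hr₀ _), le_rfl]

theorem sum_ite_pow_sub_le (hr₀ : 0 ≤ r) (hr₁ : r < 1) (I : Finset ℕ) (m : ℕ) :
    ∑ n ∈ I, (if n ≤ m then r ^ (m - n) else 0) ≤ (1 - r)⁻¹ := by
  rw [← Finset.sum_filter]
  calc ∑ n ∈ I.filter (· ≤ m), r ^ (m - n)
      ≤ ∑ n ∈ Finset.range (m + 1), r ^ (m + 1 - 1 - n) :=
        Finset.sum_le_sum_of_subset_of_nonneg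
          (fun n hn => Finset.mem_range_succ_iff.2 (Finset.mem_filter.1 hn).2)
          fun _ _ _ => pow_nonneg hr₀ _
    _ = ∑ j ∈ Finset.range (m + 1), r ^ j := Finset.sum_range_reflect (r ^ ·) (m + 1)
    _ ≤ (1 - r)⁻¹ := by
        have := geom_sum_Ico_le_of_lt_one (m := 0) (n := m + 1) hr₀ hr₁
        rwa [← Finset.range_eq_Ico, pow_zero, one_div] at this

theorem sum_sum_geomWeight_le (ha : ∀ n, 0 ≤ a n) (hr₀ : 0 ≤ r) (hr₁ : r < 1) (I : Finset ℕ) :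
    ∑ n ∈ I, ∑ m ∈ I, geomWeight a r n m ≤ (1 - r)⁻¹ * ∑ m ∈ I, a m := by
  rw [Finset.sum_comm, Finset.mul_sum]
  refine Finset.sum_le_sum fun m _ => ?_
  calc ∑ n ∈ I, geomWeight a r n m
      = a m * ∑ n ∈ I, (if n ≤ m then r ^ (m - n) else 0) := by
        simp only [geomWeight, Finset.mul_sum, mul_ite, mul_zero]
    _ ≤ a m * (1 - r)⁻¹ := mul_le_mul_of_nonneg_left (sum_ite_pow_sub_le hr₀ hr₁ I m) (ha m)
    _ = (1 - r)⁻¹ * a m := mul_comm _ _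

theorem sum_sum_mul_add_geomWeight_le (ha : ∀ n, 0 ≤ a n) (hr₀ : 0 ≤ r) (hr₁ : r < 1)
    (I : Finset ℕ) :
    ∑ n ∈ I, ∑ m ∈ I, (a n * a m + (geomWeight a r n m + geomWeight a r m n)) ≤
      (1 + 2 * (1 - r)⁻¹) * ((∑ n ∈ I, a n) ^ 2 + ∑ n ∈ I, a n) := by
  have htail := sum_sum_geomWeight_le ha hr₀ hr₁ I
  have hK : 0 ≤ (1 - r)⁻¹ := inv_nonneg.2 (sub_nonneg.2 hr₁.le)
  have hS : 0 ≤ ∑ n ∈ I, a n := Finset.sum_nonneg fun n _ => ha n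
  simp only [Finset.sum_add_distrib, ← Finset.sum_mul_sum, ← sq]
  rw [Finset.sum_comm (f := fun n m => geomWeight a r m n)]
  linarith [mul_nonneg hK (sq_nonneg (∑ n ∈ I, a n))]

theorem sum_sum_le_ofReal_of_le (ha : ∀ n, 0 ≤ a n) (hr₀ : 0 ≤ r) (hr₁ : r < 1) {c : ℝ}
    (hc : 0 ≤ c) {I : Finset ℕ} {f : ℕ → ℕ → ℝ≥0∞}
    (hf : ∀ n ∈ I, ∀ m ∈ I,
      f n m ≤ ENNReal.ofReal (c * (a n * a m + (geomWeight a r n m + geomWeight a r m n)))) :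
    ∑ n ∈ I, ∑ m ∈ I, f n m ≤
      ENNReal.ofReal (c * (1 + 2 * (1 - r)⁻¹) * ((∑ n ∈ I, a n) ^ 2 + ∑ n ∈ I, a n)) := by
  have hterm (n m : ℕ) :
      0 ≤ c * (a n * a m + (geomWeight a r n m + geomWeight a r m n)) :=
    mul_nonneg hc (add_nonneg (mul_nonneg (ha n) (ha m))
      (add_nonneg (geomWeight_nonneg ha hr₀ n m) (geomWeight_nonneg ha hr₀ m n)))
  calc ∑ n ∈ I, ∑ m ∈ I, f n m
      ≤ ∑ n ∈ I, ∑ m ∈ I,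
          ENNReal.ofReal (c * (a n * a m + (geomWeight a r n m + geomWeight a r m n))) :=
        Finset.sum_le_sum fun n hn => Finset.sum_le_sum fun m hm => hf n hn m hm
    _ = ENNReal.ofReal
          (c * ∑ n ∈ I, ∑ m ∈ I, (a n * a m + (geomWeight a r n m + geomWeight a r m n))) := by
        simp only [Finset.mul_sum]
        rw [ENNReal.ofReal_sum_of_nonneg fun n _ => Finset.sum_nonneg fun m _ => hterm n m]
        exact Finset.sum_congr rfl fun n _ =>
          (ENNReal.ofReal_sum_of_nonneg fun m _ => hterm n m).symm
    _ ≤ _ := by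
        rw [mul_assoc]
        exact ENNReal.ofReal_le_ofReal
          (mul_le_mul_of_nonneg_left (sum_sum_mul_add_geomWeight_le ha hr₀ hr₁ I) hc)

end GeometricSums

section Approximation

variable {β L : ℝ} {ψ : ℕ → ℝ} {h : ℝ → ℝ} {n : ℕ}

theorem Et_subset_iUnion_cylinder : Et β ψ h n ⊆ ⋃ ε, cylinder β n ε :=
  iUnion_mono fun _ => iUnion_subset fun _ => sep_subset _ _

theorem mem_Et_iff_of_mem_cylinder {ε : Fin n → ℤ} {x : ℝ} (hx : x ∈ cylinder β n ε) :
    x ∈ Et β ψ h n ↔ IsFull β n ε ∧ |(Tb β)^[n] x - h x| < ψ n := by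
  simp only [Et, mem_iUnion, mem_sep_iff, exists_prop]
  constructor
  · rintro ⟨ε', hfull, hx', hclose⟩
    obtain rfl := eq_of_mem_cylinder hx hx'
    exact ⟨hfull, hclose⟩
  · rintro ⟨hfull, hclose⟩
    exact ⟨ε, hfull, hx, hclose⟩

variable (hlip : ∀ x ∈ Ico (0:ℝ) 1, ∀ y ∈ Ico (0:ℝ) 1, |h x - h y| ≤ L * |x - y|)
include hlip

theorem abs_sub_le_of_mem_Et_of_mem_cylinder (hβ : 0 < β) {μ : ℝ} (hμ : 0 < μ)
    (hgap : μ * β ^ n ≤ β ^ n - L) {ε : Fin n → ℤ} {x y : ℝ}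
    (hx : x ∈ cylinder β n ε) (hy : y ∈ cylinder β n ε)
    (hxE : x ∈ Et β ψ h n) (hyE : y ∈ Et β ψ h n) :
    |x - y| ≤ 2 * ψ n / (μ * β ^ n) := by
  have hxψ := ((mem_Et_iff_of_mem_cylinder hx).1 hxE).2
  have hyψ := ((mem_Et_iff_of_mem_cylinder hy).1 hyE).2
  have hexpand : β ^ n * |x - y| ≤ 2 * ψ n + L * |x - y| := by
    rw [← abs_of_pos (pow_pos hβ n), ← abs_mul, ← iterate_sub_iterate_of_mem_cylinder hx hy]
    calc |(Tb β)^[n] x - (Tb β)^[n] y|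
        = |((Tb β)^[n] x - h x) + (-((Tb β)^[n] y - h y)) + (h x - h y)| := by ring_nf
      _ ≤ |(Tb β)^[n] x - h x| + |-((Tb β)^[n] y - h y)| + |h x - h y| := abs_add_three _ _ _
      _ ≤ 2 * ψ n + L * |x - y| := by
        rw [abs_neg]; linarith [hlip x hx.1 y hy.1]
  rw [le_div_iff₀ (mul_pos hμ (pow_pos hβ n))]
  nlinarith [mul_le_mul_of_nonneg_right hgap (abs_nonneg (x - y))]

theorem volume_Icc_inter_Et_le (hβ : 0 < β) (hψ : 0 ≤ ψ n) {μ : ℝ} (hμ : 0 < μ)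
    (hgap : μ * β ^ n ≤ β ^ n - L) (a b : ℝ) :
    volume (Icc a b ∩ Et β ψ h n) ≤ ENNReal.ofReal (2 * ψ n / μ * (b - a + 2 * (β ^ n)⁻¹)) := by
  have hpow := pow_pos hβ n
  calc volume (Icc a b ∩ Et β ψ h n)
      ≤ .ofReal (2 * ψ n / (μ * β ^ n)) / .ofReal (β ^ n)⁻¹ *
          volume (Icc (a - (β ^ n)⁻¹) (b + (β ^ n)⁻¹)) := by
        refine measure_le_div_mul_of_disjoint_cover measurableSet_cylinder
          pairwise_disjoint_cylinder (inter_subset_right.trans Et_subset_iUnion_cylinder)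
          (ENNReal.ofReal_pos.2 (inv_pos.2 hpow)).ne' ENNReal.ofReal_ne_top ?_
        rintro ε ⟨x₀, ⟨hx₀I, hx₀E⟩, hx₀ε⟩
        refine ⟨fun y hy => ?_, ?_, ((mem_Et_iff_of_mem_cylinder hx₀ε).1 hx₀E).1.volume_cylinder.ge⟩
        · have := abs_le.1 (abs_sub_le_of_mem_cylinder hβ hy hx₀ε)
          exact ⟨by linarith [hx₀I.1], by linarith [hx₀I.2]⟩
        · refine (Real.volume_le_diam _).trans (Metric.ediam_le_of_forall_dist_le ?_)
          rintro x ⟨⟨-, hxE⟩, hxε⟩ y ⟨⟨-, hyE⟩, hyε⟩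
          exact abs_sub_le_of_mem_Et_of_mem_cylinder hlip hβ hμ hgap hxε hyε hxE hyE
    _ = ENNReal.ofReal (2 * ψ n / μ * (b - a + 2 * (β ^ n)⁻¹)) := by
        rw [Real.volume_Icc, ← ENNReal.ofReal_div_of_pos (inv_pos.2 hpow),
          ← ENNReal.ofReal_mul (by positivity)]
        congr 1
        field_simp
        ring

theorem volume_cylinder_inter_Et_self_inter_Et_le (hβ : 0 < β) {m : ℕ} (hψ : 0 ≤ ψ m) {μ : ℝ}
    (hμ : 0 < μ) (hgapn : μ * β ^ n ≤ β ^ n - L) (hgapm : μ * β ^ m ≤ β ^ m - L)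
    {ε : Fin n → ℤ} {x₀ : ℝ} (hx₀ε : x₀ ∈ cylinder β n ε) (hx₀n : x₀ ∈ Et β ψ h n) :
    volume (cylinder β n ε ∩ Et β ψ h n ∩ Et β ψ h m) ≤
      ENNReal.ofReal (2 * ψ m / μ * (4 * ψ n / (μ * β ^ n) + 2 * (β ^ m)⁻¹)) := by
  set d := 2 * ψ n / (μ * β ^ n)
  calc volume (cylinder β n ε ∩ Et β ψ h n ∩ Et β ψ h m)
      ≤ volume (Icc (x₀ - d) (x₀ + d) ∩ Et β ψ h m) := by
        refine measure_mono ?_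
        rintro x ⟨⟨hxε, hxn⟩, hxm⟩
        have := abs_le.1
          (abs_sub_le_of_mem_Et_of_mem_cylinder hlip hβ hμ hgapn hxε hx₀ε hxn hx₀n)
        exact ⟨⟨by linarith, by linarith⟩, hxm⟩
    _ ≤ _ := volume_Icc_inter_Et_le hlip hβ hψ hμ hgapm _ _
    _ = _ := by
        congr 2
        ring

theorem volume_cylinder_inter_Et_inter_Et_le (hβ : 0 < β) (hψ : ∀ n, 0 ≤ ψ n) {μ : ℝ}
    (hμ : 0 < μ) {k m : ℕ} (hkn : k ≤ n) (hnm : n ≤ m) (hgapn : μ * β ^ n ≤ β ^ n - L)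
    (hgapm : μ * β ^ m ≤ β ^ m - L) {εk : Fin k → ℤ} (hεk : IsFull β k εk) :
    volume (cylinder β k εk ∩ Et β ψ h n ∩ Et β ψ h m) ≤
      ENNReal.ofReal ((β ^ k)⁻¹ * (8 / μ ^ 2 * (ψ n * ψ m) + 4 / μ * ψ m * β⁻¹ ^ (m - n))) := by
  have hpow := pow_pos hβ n
  calc volume (cylinder β k εk ∩ Et β ψ h n ∩ Et β ψ h m)
      ≤ .ofReal (2 * ψ m / μ * (4 * ψ n / (μ * β ^ n) + 2 * (β ^ m)⁻¹)) / .ofReal (β ^ n)⁻¹ *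
          volume (cylinder β k εk) := by
        refine measure_le_div_mul_of_disjoint_cover measurableSet_cylinder
          pairwise_disjoint_cylinder
          ((inter_subset_left.trans inter_subset_right).trans Et_subset_iUnion_cylinder)
          (ENNReal.ofReal_pos.2 (inv_pos.2 hpow)).ne' ENNReal.ofReal_ne_top ?_
        rintro ε ⟨x₀, ⟨⟨hx₀k, hx₀n⟩, -⟩, hx₀ε⟩
        refine ⟨cylinder_subset_cylinder hkn hx₀ε hx₀k, ?_,
          ((mem_Et_iff_of_mem_cylinder hx₀ε).1 hx₀n).1.volume_cylinder.ge⟩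
        refine (measure_mono ?_).trans (volume_cylinder_inter_Et_self_inter_Et_le hlip hβ (hψ m)
          hμ hgapn hgapm hx₀ε hx₀n)
        rintro x ⟨⟨⟨-, hxn⟩, hxm⟩, hxε⟩
        exact ⟨⟨hxε, hxn⟩, hxm⟩
    _ = _ := by
        rw [hεk.volume_cylinder, ← ENNReal.ofReal_div_of_pos (inv_pos.2 hpow),
          ← ENNReal.ofReal_mul (div_nonneg (by have := hψ n; have := hψ m; positivity)
            (inv_pos.2 hpow).le)]
        congr 1
        obtain ⟨j, rfl⟩ := Nat.exists_eq_add_of_le hnm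
        rw [Nat.add_sub_cancel_left, inv_pow, pow_add]
        field_simp
        ring

theorem volume_cylinder_inter_Et_inter_Et_le_of_le (hβ : 0 < β) (hψ : ∀ n, 0 ≤ ψ n) {μ : ℝ}
    (hμ : 0 < μ) {N k m : ℕ} (hgap : ∀ n, N ≤ n → μ * β ^ n ≤ β ^ n - L) (hkN : k ≤ N)
    (hn : N ≤ n) (hm : N ≤ m) {εk : Fin k → ℤ} (hεk : IsFull β k εk) :
    volume (cylinder β k εk ∩ Et β ψ h m ∩ Et β ψ h n) ≤
      ENNReal.ofReal ((β ^ k)⁻¹ * (8 / μ ^ 2 + 4 / μ) *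
        (ψ n * ψ m + (geomWeight ψ β⁻¹ n m + geomWeight ψ β⁻¹ m n))) := by
  wlog hnm : n ≤ m generalizing n m
  · rw [inter_right_comm]
    refine (this hm hn (le_of_not_ge hnm)).trans_eq ?_
    congr 1
    ring
  rw [inter_right_comm]
  refine (volume_cylinder_inter_Et_inter_Et_le hlip hβ hψ hμ (hkN.trans hn) hnm (hgap n hn)
    (hgap m hm) hεk).trans (ENNReal.ofReal_le_ofReal ?_)
  have hr : 0 ≤ β⁻¹ := inv_nonneg.2 hβ.le
  have hp : 0 ≤ ψ n * ψ m := mul_nonneg (hψ n) (hψ m)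
  have hq : 0 ≤ ψ m * β⁻¹ ^ (m - n) := mul_nonneg (hψ m) (pow_nonneg hr _)
  have hs := geomWeight_nonneg hψ hr m n
  rw [geomWeight, if_pos hnm, mul_assoc ((β ^ k)⁻¹)]
  refine mul_le_mul_of_nonneg_left ?_ (inv_nonneg.2 (pow_pos hβ k).le)
  have h8 : 0 ≤ 8 / μ ^ 2 := by positivity
  have h4 : 0 ≤ 4 / μ := by positivity
  nlinarith [mul_nonneg h8 (add_nonneg hq hs), mul_nonneg h4 (add_nonneg hp hs)]

end Approximation

theorem exists_pos_mul_pow_le_pow_sub {β L : ℝ} (hβ : 1 < β) (hL : 0 ≤ L) :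
    ∃ μ > 0, ∀ n : ℕ, L < β ^ n → μ * β ^ n ≤ β ^ n - L := by
  have hex : ∃ n : ℕ, L < β ^ n := pow_unbounded_of_one_lt L hβ
  have hpos : 0 < β ^ Nat.find hex := pow_pos (one_pos.trans hβ) _
  refine ⟨1 - L / β ^ Nat.find hex, sub_pos.2 ((div_lt_one hpos).2 (Nat.find_spec hex)),
    fun n hn => ?_⟩
  have hle : β ^ Nat.find hex ≤ β ^ n := pow_le_pow_right₀ hβ.le (Nat.find_min' hex hn)
  have hL' : L ≤ L / β ^ Nat.find hex * β ^ n := by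
    rw [div_mul_eq_mul_div, le_div_iff₀ hpos]
    exact mul_le_mul_of_nonneg_left hle hL
  linarith [show (1 - L / β ^ Nat.find hex) * β ^ n = β ^ n - L / β ^ Nat.find hex * β ^ n by ring]


theorem stmt18_general (β L : ℝ) (hβ : 1 < β) (hL : 0 ≤ L)
    (h : ℝ → ℝ)
    (hlip : ∀ x ∈ Set.Ico (0:ℝ) 1, ∀ y ∈ Set.Ico (0:ℝ) 1, |h x - h y| ≤ L * |x - y|)
    (ψ : ℕ → ℝ) (hψ : ∀ n, 0 < ψ n) :
    ∃ C : ℝ, 0 < C ∧ ∀ (k : ℕ) (εk : Fin k → ℤ), IsFull β k εk →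
      ∀ N M : ℕ, k ≤ N → N < M → L < β ^ N →
      ∑ n ∈ Finset.Icc N M, ∑ m ∈ Finset.Icc N M,
          volume (cylinder β k εk ∩ Et β ψ h m ∩ Et β ψ h n) ≤
        ENNReal.ofReal (C * β ^ (-(k:ℤ)) *
          ((∑ n ∈ Finset.Icc N M, ψ n) ^ 2 + ∑ n ∈ Finset.Icc N M, ψ n)) := by
  obtain ⟨μ, hμ, hgap⟩ := exists_pos_mul_pow_le_pow_sub hβ hL
  have hβ₀ : 0 < β := one_pos.trans hβ
  have hr₁ : β⁻¹ < 1 := inv_lt_one_of_one_lt₀ hβ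
  have hψ₀ (n : ℕ) : 0 ≤ ψ n := (hψ n).le
  refine ⟨(8 / μ ^ 2 + 4 / μ) * (1 + 2 * (1 - β⁻¹)⁻¹), by positivity,
    fun k εk hεk N M hkN _ hLN => ?_⟩
  have hgapN (n : ℕ) (hn : N ≤ n) : μ * β ^ n ≤ β ^ n - L :=
    hgap n (hLN.trans_le (pow_le_pow_right₀ hβ.le hn))
  refine (sum_sum_le_ofReal_of_le (I := Finset.Icc N M) hψ₀ (inv_nonneg.2 hβ₀.le) hr₁
    (by positivity : 0 ≤ (β ^ k)⁻¹ * (8 / μ ^ 2 + 4 / μ)) fun n hn m hm =>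
      volume_cylinder_inter_Et_inter_Et_le_of_le hlip hβ₀ hψ₀ hμ hgapN hkN
        (Finset.mem_Icc.1 hn).1 (Finset.mem_Icc.1 hm).1 hεk).trans_eq ?_
  rw [zpow_neg, zpow_natCast]
  ring_nf

/-- Correlation estimate (Lemma 5.4): for any full word ε_k and M > N ≥ k (with β^N > L),
∑_{n,m=N}^M λ(I_{k,β}(ε_k) ∩ Ẽ_m ∩ Ẽ_n) ≤ C |I_{k,β}(ε_k)| ((∑ψ)² + ∑ψ),
where |I_{k,β}(ε_k)| = β^{-k} and C does not depend on ε_k, N, M. -/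
theorem stmt18 (β L : ℝ) (hβ : 1 < β) (hL : 0 ≤ L)
    (h : ℝ → ℝ) (hmap : ∀ x ∈ Set.Ico (0:ℝ) 1, h x ∈ Set.Icc (0:ℝ) 1)
    (hlip : ∀ x ∈ Set.Ico (0:ℝ) 1, ∀ y ∈ Set.Ico (0:ℝ) 1, |h x - h y| ≤ L * |x - y|)
    (ψ : ℕ → ℝ) (hψ : ∀ n, 0 < ψ n) :
    ∃ C : ℝ, 0 < C ∧ ∀ (k : ℕ) (εk : Fin k → ℤ), IsFull β k εk →
      ∀ N M : ℕ, k ≤ N → N < M → L < β ^ N →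
      ∑ n ∈ Finset.Icc N M, ∑ m ∈ Finset.Icc N M,
          volume (cylinder β k εk ∩ Et β ψ h m ∩ Et β ψ h n) ≤
        ENNReal.ofReal (C * β ^ (-(k:ℤ)) *
          ((∑ n ∈ Finset.Icc N M, ψ n) ^ 2 + ∑ n ∈ Finset.Icc N M, ψ n)) :=
  stmt18_general β L hβ hL h hlip ψ hψ
end

section
/- Let d ≥ 1, 1 < β₁ ≤ ⋯ ≤ β_d, functions ψ_i : ℕ → (0,1], a dimension function f, and for n define s_n and A_n, K_{n,1}, K_{n,2} as in the convergence criterion. Suppose m with 0 ≤ m ≤ d−1 is the smallest integer such that (s_n ∏_{i=1}^m ψ_i(n)^{-1} ∏_{i=1}^d β_i^n)^{1/(k_j−m)} ≥ ψ_{m+1}(n), where k_j satisfies k_{j−1} ≤ m < k_j for the grouping 0 = k_0 ≤ k_1 < ⋯ < k_s = d with β_{k_j} < β_{k_j+1} = ⋯ = β_{k_{j+1}} < β_{k_{j+1}+1}. Then the quantities (s_n ∏_{i=1}^ℓ ψ_i(n)^{-1} ∏_{i=1}^d β_i^n)^{1/(k_j−ℓ)} are nondecreasing as ℓ decreases from m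 to k_{j−1}; i.e. (s_n ∏_{i=1}^m ψ_i(n)^{-1} ∏_{i=1}^d β_i^n)^{1/(k_j−m)} ≤ ⋯ ≤ (s_n ∏_{i=1}^{k_{j−1}} ψ_i(n)^{-1} ∏_{i=1}^d β_i^n)^{1/(k_j−k_{j−1})}. -/
/-!
Write `Q ℓ = s_n ∏_{i ≤ ℓ} ψ_i(n)⁻¹ ∏ β_i^n`, so `Q (ℓ+1) = Q ℓ / ψ_{ℓ+1}(n)`. By minimality of `m`,
`c := Q ℓ ^ (1/(b-ℓ)) < ψ_{ℓ+1}(n)` for `ℓ < m`, hence `Q (ℓ+1) ≤ c^(b-ℓ) / c = c^(b-ℓ-1)`,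
i.e. `Q (ℓ+1) ^ (1/(b-ℓ-1)) ≤ Q ℓ ^ (1/(b-ℓ))`. Chaining these steps gives the claim; the only
other input is `s_n ≥ 0`, which makes the real powers meaningful.
-/

open MeasureTheory Set
open scoped Classical Topology BigOperators ENNReal

/-- The finite set A_n = {β_i^{-n}, β_i^{-n}ψ_i(n)} indexed by Fin d ⊕ Fin d. -/
noncomputable def tauSet (d : ℕ) (β : Fin d → ℝ) (ψ : Fin d → ℕ → ℝ) (n : ℕ) :
    Fin d ⊕ Fin d → ℝ :=
  Sum.elim (fun i => β i ^ (-(n:ℤ))) (fun i => β i ^ (-(n:ℤ)) * ψ i n)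

/-- The quantity f(τ) ∏_{i ∈ K_{n,1}(τ)} β_i^{-n}/τ ∏_{i ∈ K_{n,2}(τ)} β_i^{-n}ψ_i(n)/τ,
with K_{n,1}(τ) = {i : β_i^{-n} ≤ τ} and K_{n,2}(τ) = {i : β_i^{-n}ψ_i(n) ≥ τ}. -/
noncomputable def snTerm (d : ℕ) (β : Fin d → ℝ) (ψ : Fin d → ℕ → ℝ) (f : ℝ → ℝ)
    (n : ℕ) (τ : ℝ) : ℝ :=
  f τ * (∏ i ∈ Finset.univ.filter (fun i : Fin d => β i ^ (-(n:ℤ)) ≤ τ),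
      (β i ^ (-(n:ℤ)) / τ)) *
    ∏ i ∈ Finset.univ.filter (fun i : Fin d => τ ≤ β i ^ (-(n:ℤ)) * ψ i n),
      (β i ^ (-(n:ℤ)) * ψ i n / τ)

/-- s_n(Ψ,f) = min_{τ ∈ A_n} snTerm. -/
noncomputable def snval (d : ℕ) (β : Fin d → ℝ) (ψ : Fin d → ℕ → ℝ) (f : ℝ → ℝ)
    (n : ℕ) : ℝ :=
  ⨅ t : Fin d ⊕ Fin d, snTerm d β ψ f n (tauSet d β ψ n t)

namespace Real

lemma mul_inv_rpow_inv_sub_one_le {x w p : ℝ} (hx : 0 ≤ x) (hw : 0 < w) (hp : 1 < p)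
    (h : x ^ p⁻¹ ≤ w) : (x * w⁻¹) ^ (p - 1)⁻¹ ≤ x ^ p⁻¹ := by
  set c := x ^ p⁻¹
  have hc : 0 ≤ c := rpow_nonneg hx _
  have hx_eq : x = c ^ (p - 1) * c := by
    rw [← rpow_add_one' hc (by linarith), sub_add_cancel, rpow_inv_rpow hx (by linarith)]
  have hcw : c * w⁻¹ ≤ 1 := mul_inv_le_one_of_le₀ h hw.le
  calc (x * w⁻¹) ^ (p - 1)⁻¹
      ≤ (c ^ (p - 1)) ^ (p - 1)⁻¹ := by
        refine rpow_le_rpow (by positivity) ?_ (inv_nonneg.2 (by linarith))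
        rw [hx_eq, mul_assoc]
        exact mul_le_of_le_one_right (rpow_nonneg hc _) hcw
    _ = c := rpow_rpow_inv hc (by linarith)

end Real

lemma antitoneOn_rpow_inv_of_mul_inv {Q : ℕ → ℝ} {a m b : ℕ} (hQ : ∀ ℓ, 0 ≤ Q ℓ) (hmb : m < b)
    (hstep : ∀ ℓ ∈ Ico a m, ∃ w > 0, Q ℓ ^ ((b : ℝ) - ℓ)⁻¹ ≤ w ∧ Q (ℓ + 1) = Q ℓ * w⁻¹) :
    AntitoneOn (fun ℓ : ℕ => Q ℓ ^ ((b : ℝ) - ℓ)⁻¹) (Icc a m) := by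
  refine antitoneOn_of_add_one_le ordConnected_Icc fun ℓ _ hℓ hℓ1 => ?_
  obtain ⟨w, hw, hle, hQ1⟩ := hstep ℓ (Set.mem_Ico.2 ⟨hℓ.1, hℓ1.2⟩)
  have hℓb : (ℓ : ℝ) + 1 < b := by exact_mod_cast hℓ1.2.trans_lt hmb
  simpa only [hQ1, Nat.cast_add_one, ← sub_sub] using
    Real.mul_inv_rpow_inv_sub_one_le (hQ ℓ) hw (by linarith) hle

lemma Fin.prod_filter_val_lt_add_one {M : Type*} [CommMonoid M] {d ℓ : ℕ} (hℓ : ℓ < d)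
    (g : Fin d → M) :
    ∏ i ∈ Finset.univ.filter (fun i : Fin d => (i : ℕ) < ℓ + 1), g i =
      (∏ i ∈ Finset.univ.filter (fun i : Fin d => (i : ℕ) < ℓ), g i) * g ⟨ℓ, hℓ⟩ := by
  have hfilter : Finset.univ.filter (fun i : Fin d => (i : ℕ) < ℓ + 1) =
      insert ⟨ℓ, hℓ⟩ (Finset.univ.filter (fun i : Fin d => (i : ℕ) < ℓ)) := by
    ext i
    simp only [Finset.mem_filter, Finset.mem_univ, true_and, Finset.mem_insert,
      Nat.lt_succ_iff_lt_or_eq, Fin.ext_iff]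
    tauto
  rw [hfilter, Finset.prod_insert (by simp), mul_comm]

section snval

variable {d : ℕ} {β : Fin d → ℝ} {ψ : Fin d → ℕ → ℝ} {f : ℝ → ℝ} {n : ℕ}

lemma tauSet_pos (hβ : ∀ i, 0 < β i) (hψ : ∀ i, 0 < ψ i n) (t : Fin d ⊕ Fin d) :
    0 < tauSet d β ψ n t := by
  rcases t with i | i
  · exact zpow_pos (hβ i) _
  · exact mul_pos (zpow_pos (hβ i) _) (hψ i)

lemma snTerm_nonneg (hβ : ∀ i, 0 < β i) (hψ : ∀ i, 0 < ψ i n) {τ : ℝ} (hτ : 0 ≤ τ)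
    (hfτ : 0 ≤ f τ) : 0 ≤ snTerm d β ψ f n τ := by
  have hβn : ∀ i, 0 < β i ^ (-(n : ℤ)) := fun i => zpow_pos (hβ i) _
  exact mul_nonneg (mul_nonneg hfτ (Finset.prod_nonneg fun i _ => div_nonneg (hβn i).le hτ))
    (Finset.prod_nonneg fun i _ => div_nonneg (mul_pos (hβn i) (hψ i)).le hτ)

lemma snval_nonneg (hβ : ∀ i, 0 < β i) (hψ : ∀ i, 0 < ψ i n) (hf : ∀ τ, 0 < τ → 0 ≤ f τ) :
    0 ≤ snval d β ψ f n :=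
  Real.iInf_nonneg fun t =>
    snTerm_nonneg hβ hψ (tauSet_pos hβ hψ t).le (hf _ (tauSet_pos hβ hψ t))

end snval

theorem stmt19_general (d : ℕ) (β : Fin d → ℝ) (hβ : ∀ i, 1 < β i)
    (ψ : Fin d → ℕ → ℝ) (hψ : ∀ i n, 0 < ψ i n)
    (f : ℝ → ℝ) (hf_mono : Monotone f) (hf0 : f 0 = 0)
    (n : ℕ) (a b m : ℕ) (hmb : m < b) (hbd : b ≤ d)
    (Q : ℕ → ℝ)
    (hQ : ∀ ℓ : ℕ, Q ℓ = snval d β ψ f n *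
      (∏ i ∈ Finset.univ.filter (fun i : Fin d => (i:ℕ) < ℓ), (ψ i n)⁻¹) *
      ∏ i, β i ^ n)
    (hmin : ∀ ℓ : ℕ, a ≤ ℓ → ℓ < m → ∀ i : Fin d, (i:ℕ) = ℓ →
      Q ℓ ^ (((b:ℝ) - ℓ)⁻¹) < ψ i n) :
    ∀ ℓ ℓ' : ℕ, a ≤ ℓ → ℓ ≤ ℓ' → ℓ' ≤ m →
      Q ℓ' ^ (((b:ℝ) - ℓ')⁻¹) ≤ Q ℓ ^ (((b:ℝ) - ℓ)⁻¹) := by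
  have hβpos : ∀ i, 0 < β i := fun i => one_pos.trans (hβ i)
  have hs : 0 ≤ snval d β ψ f n :=
    snval_nonneg hβpos (hψ · n) fun τ hτ => hf0 ▸ hf_mono hτ.le
  have hQnonneg : ∀ ℓ, 0 ≤ Q ℓ := fun ℓ => by
    rw [hQ ℓ]
    exact mul_nonneg (mul_nonneg hs (Finset.prod_nonneg fun i _ => (inv_pos.2 (hψ i n)).le))
      (Finset.prod_nonneg fun i _ => (pow_pos (hβpos i) n).le)
  have hanti := antitoneOn_rpow_inv_of_mul_inv hQnonneg hmb fun ℓ hℓ => by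
    obtain ⟨haℓ, hℓm⟩ := Set.mem_Ico.1 hℓ
    have hℓd : ℓ < d := (hℓm.trans hmb).trans_le hbd
    refine ⟨ψ ⟨ℓ, hℓd⟩ n, hψ _ n, (hmin ℓ haℓ hℓm _ rfl).le, ?_⟩
    rw [hQ, hQ, Fin.prod_filter_val_lt_add_one hℓd]
    ring
  intro ℓ ℓ' haℓ hℓℓ' hℓ'm
  exact hanti ⟨haℓ, hℓℓ'.trans hℓ'm⟩ ⟨haℓ.trans hℓℓ', hℓ'm⟩ hℓℓ'

/-- Lemma 4.2: with a = k_{j−1}, b = k_j, Q(ℓ) = s_n ∏_{i=1}^ℓ ψ_i(n)^{-1} ∏_{i=1}^d β_i^n,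
and m the smallest integer with Q(m)^{1/(b−m)} ≥ ψ_{m+1}(n), the quantities
Q(ℓ)^{1/(b−ℓ)} are nondecreasing as ℓ decreases from m to a:
Q(m)^{1/(b−m)} ≤ ⋯ ≤ Q(a)^{1/(b−a)}. -/
theorem stmt19 (d : ℕ) (hd : 1 ≤ d) (β : Fin d → ℝ) (hβ : ∀ i, 1 < β i)
    (hβmono : Monotone β)
    (ψ : Fin d → ℕ → ℝ) (hψ : ∀ i n, 0 < ψ i n) (hψ1 : ∀ i n, ψ i n ≤ 1)
    (f : ℝ → ℝ) (hf_cont : Continuous f) (hf_mono : Monotone f) (hf0 : f 0 = 0)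
    (n : ℕ) (a b m : ℕ) (ham : a ≤ m) (hmb : m < b) (hbd : b ≤ d)
    (Q : ℕ → ℝ)
    (hQ : ∀ ℓ : ℕ, Q ℓ = snval d β ψ f n *
      (∏ i ∈ Finset.univ.filter (fun i : Fin d => (i:ℕ) < ℓ), (ψ i n)⁻¹) *
      ∏ i, β i ^ n)
    (hmin : ∀ ℓ : ℕ, a ≤ ℓ → ℓ < m → ∀ i : Fin d, (i:ℕ) = ℓ →
      Q ℓ ^ (((b:ℝ) - ℓ)⁻¹) < ψ i n)
    (hdef : ∀ i : Fin d, (i:ℕ) = m → ψ i n ≤ Q m ^ (((b:ℝ) - m)⁻¹)) :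
    ∀ ℓ ℓ' : ℕ, a ≤ ℓ → ℓ ≤ ℓ' → ℓ' ≤ m →
      Q ℓ' ^ (((b:ℝ) - ℓ')⁻¹) ≤ Q ℓ ^ (((b:ℝ) - ℓ)⁻¹) :=
  stmt19_general d β hβ ψ hψ f hf_mono hf0 n a b m hmb hbd Q hQ hmin
end
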